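/- arXiv:2201.03488 — 8 statements merged into one kernel-verified Lean document; each statement's English description precedes it below -/
import Mathlib

section
/- Let g : 𝔯 → 𝔰 be a surjective continuous ring homomorphism between complete, separated, right linear topological rings. If 𝔯 is topologically semiperfect, then 𝔰 is topologically semiperfect as well. -/
open Filter MulOpposite

universe u

/-- The corner ring `eRe` of an idempotent `e` is a local ring: `e` is idempotent, nonzero,
and every element `exe` of the corner ring is invertible in `eRe` (with unit `e`),
or `e - exe` is. -/
def IsLocalIdempotent {R : Type*} [Ring R] (e : R) : Prop :=
  IsIdempotentElem e ∧ e ≠ 0 ∧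
    ∀ x : R,
      (∃ y : R, e * x * e * (e * y * e) = e ∧ e * y * e * (e * x * e) = e) ∨
      (∃ y : R, (e - e * x * e) * (e * y * e) = e ∧ e * y * e * (e - e * x * e) = e)

/-- Open right ideals form a base of neighborhoods of zero. -/
def IsRightLinearTopology (R : Type u) [Ring R] [TopologicalSpace R] : Prop :=
  ∀ s ∈ nhds (0 : R), ∃ I : Submodule Rᵐᵒᵖ R, IsOpen (I : Set R) ∧ (I : Set R) ⊆ s

/-- A topological ring is topologically semiperfect if there is a zero-convergent family of
pairwise orthogonal local idempotents summing to `1`. -/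
def IsTopSemiperfect (R : Type u) [Ring R] [TopologicalSpace R] : Prop :=
  ∃ (Z : Type u) (e : Z → R),
    Filter.Tendsto e Filter.cofinite (nhds 0) ∧
    (∀ z, IsLocalIdempotent (e z)) ∧
    (∀ z w, z ≠ w → e z * e w = 0) ∧
    HasSum e 1

/-- The topological Jacobson radical: the intersection of all open maximal right ideals. -/
def topJacobson (R : Type u) [Ring R] [TopologicalSpace R] : Set R :=
  ⋂ I ∈ {I : Submodule Rᵐᵒᵖ R | IsOpen (I : Set R) ∧ IsCoatom I}, (I : Set R)

/-- The abstract Jacobson radical: the intersection of all maximal right ideals. -/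
def absJacobson (R : Type u) [Ring R] : Set R :=
  ⋂ I ∈ {I : Submodule Rᵐᵒᵖ R | IsCoatom I}, (I : Set R)

/-- A right module is discrete if the annihilator of each element is open. -/
def IsDiscreteModule (R : Type u) [Ring R] [TopologicalSpace R]
    (N : Type u) [AddCommGroup N] [Module Rᵐᵒᵖ N] : Prop :=
  ∀ n : N, IsOpen {r : R | op r • n = 0}

/-- `N` has a projective cover in the category of all `R₀`-modules. -/
def HasProjCover (R₀ : Type u) [Ring R₀] (N : Type u) [AddCommGroup N] [Module R₀ N] : Prop :=
  ∃ (P : Type u) (_ : AddCommGroup P) (_ : Module R₀ P) (p : P →ₗ[R₀] N),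
    Module.Projective R₀ P ∧ Function.Surjective p ∧
      ∀ K : Submodule R₀ P, K ⊔ LinearMap.ker p = ⊤ → K = ⊤

/-- The finite topology on `End_A(M)^op`: the topology of pointwise convergence,
`M` being discrete; a base of neighborhoods of zero is given by the annihilators of
finite subsets of `M`. -/
def finiteTopologyEnd (A M : Type u) [Ring A] [AddCommGroup M] [Module A M] :
    TopologicalSpace (Module.End A M)ᵐᵒᵖ :=
  TopologicalSpace.induced (fun f (m : M) => f.unop m)
    (@Pi.topologicalSpace M (fun _ => M) (fun _ => ⊥))

/-- The topological Jacobson radical, as an additive subgroup. -/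
def topJacobsonAddSubgroup (R : Type u) [Ring R] [TopologicalSpace R] : AddSubgroup R :=
  ⨅ I ∈ {I : Submodule Rᵐᵒᵖ R | IsOpen (I : Set R) ∧ IsCoatom I}, I.toAddSubgroup
theorem continuous_surjective_image_topSemiperfect
    (R : Type u) (S : Type u) [Ring R] [UniformSpace R] [IsUniformAddGroup R] [IsTopologicalRing R]
    [T2Space R] [CompleteSpace R] (hRL : IsRightLinearTopology R)
    [Ring S] [UniformSpace S] [IsUniformAddGroup S] [IsTopologicalRing S]
    [T2Space S] [CompleteSpace S] (hSL : IsRightLinearTopology S)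
    (g : R →+* S) (hg : Continuous g) (hsurj : Function.Surjective g)
    (hSP : IsTopSemiperfect R) : IsTopSemiperfect S := by
  obtain ⟨Z, e, htend, hloc, horth, hsum⟩ := hSP
  refine ⟨{z : Z // g (e z) ≠ 0}, fun z => g (e z.1), ?_, ?_, ?_, ?_⟩
  · exact (hg.tendsto' 0 0 g.map_zero).comp
      (htend.comp Subtype.val_injective.tendsto_cofinite)
  · rintro ⟨z, hz⟩
    refine ⟨?_, hz, ?_⟩
    · have := (hloc z).1
      simpa [IsIdempotentElem, ← map_mul] using congrArg g this
    · intro x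
      obtain ⟨r, rfl⟩ := hsurj x
      rcases (hloc z).2.2 r with ⟨y, h1, h2⟩ | ⟨y, h1, h2⟩
      · exact Or.inl ⟨g y, by simpa [← map_mul] using congrArg g h1,
          by simpa [← map_mul] using congrArg g h2⟩
      · exact Or.inr ⟨g y, by simpa [← map_mul, ← map_sub] using congrArg g h1,
          by simpa [← map_mul, ← map_sub] using congrArg g h2⟩
  · rintro ⟨z, _⟩ ⟨w, _⟩ hzw
    have hne : z ≠ w := fun h => hzw (by simp [h])
    rw [← map_mul, horth z w hne, map_zero]
  · have h1 : HasSum (fun z => g (e z)) 1 := by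
      simpa [Function.comp_def] using hsum.map g.toAddMonoidHom hg
    exact (hasSum_subtype_iff_of_support_subset (fun z hz => hz)).2 h1
end

section
/- Let A be an associative unital ring, M a left A-module, and 𝔯 = End_A(M)^op endowed with the finite topology. Then an element h ∈ 𝔯 belongs to the topological Jacobson radical 𝔥(𝔯) if and only if, for every element r ∈ 𝔯, the A-module endomorphism of M given by 1 − hr is a locally split monomorphism. -/
open Filter MulOpposite

universe u

/-! `h` lies in the topological Jacobson radical iff `1 - hr` is right invertible modulo every
open right ideal `U`, for every `r`. Indeed, if `(1 - hr)R + U` were proper, a maximal right ideal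
containing it would be open (it contains `U`) and contain `h`, hence `1`; conversely, if `h` lies
outside an open maximal right ideal `I`, then `1 - hr ∈ I` for some `r`. In the finite topology the
open right ideals are those containing the annihilator of a finite set `s ⊆ M`, and `1 - (1 - hr)g`
annihilates `s` exactly when `g` is a left inverse of `1 - hr` on `s` (composition is reversed in
`End_A(M)^op`). -/

section RightIdeals

variable {R : Type*} [Ring R]

instance Module.Finite.mulOpposite_self : Module.Finite Rᵐᵒᵖ R :=
  Module.Finite.of_surjective (LinearMap.toSpanSingleton Rᵐᵒᵖ R 1) fun x =>
    ⟨op x, by simp⟩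

theorem Submodule.mul_mem_right_op {I : Submodule Rᵐᵒᵖ R} {x : R} (hx : x ∈ I) (y : R) :
    x * y ∈ I := by
  simpa using I.smul_mem (op y) hx

theorem Submodule.one_notMem_of_isCoatom {I : Submodule Rᵐᵒᵖ R} (hI : IsCoatom I) :
    (1 : R) ∉ I := fun h1 =>
  hI.1 <| eq_top_iff.2 fun x _ => by simpa using I.mul_mem_right_op h1 x

theorem Submodule.exists_one_sub_mul_mem_of_one_mem_sup_span {U : Submodule Rᵐᵒᵖ R} {x : R}
    (h1 : (1 : R) ∈ U ⊔ span Rᵐᵒᵖ {x}) : ∃ r : R, 1 - x * r ∈ U := by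
  obtain ⟨u, hu, y, hy, huy⟩ := mem_sup.1 h1
  obtain ⟨c, rfl⟩ := mem_span_singleton.1 hy
  rw [smul_eq_mul_unop] at huy
  exact ⟨c.unop, eq_sub_of_add_eq huy ▸ hu⟩

theorem Submodule.exists_one_sub_mul_mem_of_isCoatom {I : Submodule Rᵐᵒᵖ R} (hI : IsCoatom I)
    {x : R} (hx : x ∉ I) : ∃ r : R, 1 - x * r ∈ I := by
  have hsup : I ⊔ span Rᵐᵒᵖ {x} = ⊤ :=
    hI.2 _ (lt_of_le_of_ne le_sup_left fun e => hx (e ▸ mem_sup_right (mem_span_singleton_self x)))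
  exact exists_one_sub_mul_mem_of_one_mem_sup_span (hsup ▸ mem_top)

theorem mem_topJacobson_iff_forall_exists_one_sub_mul_mem [TopologicalSpace R]
    [SeparatelyContinuousAdd R] {h : R} :
    h ∈ topJacobson R ↔
      ∀ r : R, ∀ U : Submodule Rᵐᵒᵖ R, IsOpen (U : Set R) → ∃ y : R, 1 - (1 - h * r) * y ∈ U := by
  simp only [topJacobson, Set.mem_iInter, Set.mem_ofPred_eq, SetLike.mem_coe, and_imp]
  constructor
  · intro hrad r U hU
    by_contra! hy
    set J := U ⊔ Submodule.span Rᵐᵒᵖ {1 - h * r}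
    have hJ : J ≠ ⊤ := fun e => by
      obtain ⟨y, hy'⟩ :=
        Submodule.exists_one_sub_mul_mem_of_one_mem_sup_span (e ▸ Submodule.mem_top : (1 : R) ∈ J)
      exact hy y hy'
    obtain ⟨I, hI, hUI⟩ := (eq_top_or_exists_le_coatom J).resolve_left hJ
    have hIopen : IsOpen (I : Set R) :=
      AddSubgroup.isOpen_mono (H₁ := U.toAddSubgroup) (H₂ := I.toAddSubgroup)
        (le_sup_left.trans hUI : U ≤ I) hU
    have hsub : 1 - h * r ∈ I :=
      hUI (Submodule.mem_sup_right (Submodule.mem_span_singleton_self _))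
    have hhr : h * r ∈ I := I.mul_mem_right_op (hrad I hIopen hI) r
    exact Submodule.one_notMem_of_isCoatom hI (by simpa using I.add_mem hsub hhr)
  · intro H I hIopen hI
    by_contra hh
    obtain ⟨r, hr⟩ := Submodule.exists_one_sub_mul_mem_of_isCoatom hI hh
    obtain ⟨y, hy⟩ := H r I hIopen
    exact Submodule.one_notMem_of_isCoatom hI
      (by simpa using I.add_mem hy (I.mul_mem_right_op hr y))

end RightIdeals

section FiniteTopology

variable {A M : Type u} [Ring A] [AddCommGroup M] [Module A M]

attribute [local instance] finiteTopologyEnd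

variable (A) in
def endOpAnnihilator (S : Set M) : Submodule (Module.End A M)ᵐᵒᵖᵐᵒᵖ (Module.End A M)ᵐᵒᵖ where
  carrier := {f | ∀ x ∈ S, f.unop x = 0}
  add_mem' hf hg x hx := by simp [hf x hx, hg x hx]
  zero_mem' _ _ := rfl
  smul_mem' c f hf x hx := by simp [smul_eq_mul_unop, hf x hx]

theorem mem_endOpAnnihilator {S : Set M} {f : (Module.End A M)ᵐᵒᵖ} :
    f ∈ endOpAnnihilator A S ↔ ∀ x ∈ S, f.unop x = 0 :=
  Iff.rfl

theorem one_sub_mul_op_mem_endOpAnnihilator_iff {S : Set M} {f : (Module.End A M)ᵐᵒᵖ}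
    {g : Module.End A M} : 1 - f * op g ∈ endOpAnnihilator A S ↔ ∀ x ∈ S, g (f.unop x) = x := by
  simp only [mem_endOpAnnihilator, unop_sub, unop_one, unop_mul, unop_op, LinearMap.sub_apply,
    Module.End.one_apply, Module.End.mul_apply, sub_eq_zero]
  exact forall₂_congr fun _ _ => eq_comm

def endOpEval : (Module.End A M)ᵐᵒᵖ →+ (M → M) where
  toFun f m := f.unop m
  map_zero' := rfl
  map_add' _ _ := rfl

theorem isTopologicalAddGroup_finiteTopologyEnd :
    IsTopologicalAddGroup (Module.End A M)ᵐᵒᵖ :=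
  let _ : TopologicalSpace M := ⊥
  have _ : DiscreteTopology M := ⟨rfl⟩
  topologicalAddGroup_induced endOpEval

attribute [local instance] isTopologicalAddGroup_finiteTopologyEnd

theorem nhds_zero_finiteTopologyEnd :
    nhds (0 : (Module.End A M)ᵐᵒᵖ) = Filter.comap endOpEval (Filter.pi fun _ => pure 0) := by
  let _ : TopologicalSpace M := ⊥
  rw [finiteTopologyEnd, nhds_induced, nhds_pi]
  have _ : DiscreteTopology M := ⟨rfl⟩
  simp only [nhds_discrete]
  rfl

theorem isOpen_endOpAnnihilator (s : Finset M) :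
    IsOpen (endOpAnnihilator A (s : Set M) : Set (Module.End A M)ᵐᵒᵖ) :=
  AddSubgroup.isOpen_of_mem_nhds (endOpAnnihilator A (s : Set M)).toAddSubgroup <| by
    rw [nhds_zero_finiteTopologyEnd]
    exact ⟨(s : Set M).pi fun _ => {0},
      Filter.pi_mem_pi s.finite_toSet fun _ _ => Filter.mem_pure.2 rfl, fun _ hf => hf⟩

theorem exists_endOpAnnihilator_subset {U : Set (Module.End A M)ᵐᵒᵖ} (hU : IsOpen U)
    (h0 : 0 ∈ U) : ∃ s : Finset M, (endOpAnnihilator A (s : Set M) : Set _) ⊆ U := by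
  have hnhds := hU.mem_nhds h0
  rw [nhds_zero_finiteTopologyEnd] at hnhds
  obtain ⟨V, hV, hVU⟩ := hnhds
  obtain ⟨s, t, ht, htV⟩ := Filter.mem_pi'.1 hV
  exact ⟨s, fun f hf => hVU (htV fun x hx => by simpa [endOpEval, hf x hx] using ht x)⟩

theorem mem_topJacobson_iff_locally_split_mono
    (A : Type u) (M : Type u) [Ring A] [AddCommGroup M] [Module A M]
    (h : (Module.End A M)ᵐᵒᵖ) :
    letI : TopologicalSpace (Module.End A M)ᵐᵒᵖ := finiteTopologyEnd A M
    (h ∈ topJacobson (Module.End A M)ᵐᵒᵖ ↔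
      ∀ r : (Module.End A M)ᵐᵒᵖ, ∀ s : Finset M, ∃ g : M →ₗ[A] M,
        ∀ x ∈ s, g ((MulOpposite.unop (1 - h * r) : Module.End A M) x) = x) := by
  rw [mem_topJacobson_iff_forall_exists_one_sub_mul_mem]
  constructor
  · intro H r s
    obtain ⟨y, hy⟩ := H r _ (isOpen_endOpAnnihilator s)
    exact ⟨y.unop, one_sub_mul_op_mem_endOpAnnihilator_iff.1 hy⟩
  · intro H r U hU
    obtain ⟨s, hs⟩ := exists_endOpAnnihilator_subset hU U.zero_mem
    obtain ⟨g, hg⟩ := H r s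
    exact ⟨op g, hs (one_sub_mul_op_mem_endOpAnnihilator_iff.2 hg)⟩

end FiniteTopology
end

section
/- Let 𝔯 be a topologically semiperfect complete, separated, right linear topological ring and let e ∈ 𝔯 be a local idempotent. Then eH(𝔯) = e𝔥(𝔯) and H(𝔯)e = 𝔥(𝔯)e, where H(𝔯) is the abstract Jacobson radical and 𝔥(𝔯) is the topological Jacobson radical of 𝔯. -/
open Filter MulOpposite

universe u

section AuxRadical

variable {A : Type*} [Ring A]

private lemma flip_rinv {a b : A} (h : ∃ w, (1 - b * a) * w = 1) :
    ∃ w, (1 - a * b) * w = 1 := by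
  obtain ⟨w, hw⟩ := h
  exact ⟨1 + a * w * b, by linear_combination (norm := noncomm_ring) a * hw * b⟩

private lemma aux_inv {a n v : A} (hv : (1 - a) * v = 1) (hnvn : n * v * n = 0) :
    (1 - (a + n)) * (v + v * n * v) = 1 := by
  have h1 : (1 - (a + n)) * (v + v * n * v)
      = (1 - a) * v + ((1 - a) * v) * (n * v) - n * v - (n * v * n) * v := by noncomm_ring
  rw [h1, hv, hnvn]; noncomm_ring

private lemma hv_lemma {e y u : A} (he : e * e = e) (h1 : (e - e * y * e) * (e * u * e) = e) :
    (1 - e * y * e) * (1 - e + e * u * e) = 1 := by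
  linear_combination (norm := noncomm_ring) h1 + e * y * he - he * u * e

private lemma rinv_left {e y u : A} (he : e * e = e) (h1 : (e - e * y * e) * (e * u * e) = e) :
    ∃ w, (1 - e * y) * w = 1 := by
  have hnvn : (e * y - e * y * e) * (1 - e + e * u * e) * (e * y - e * y * e) = 0 := by
    linear_combination (norm := noncomm_ring)
      (-(e * y)) * he * (y * (1 - e)) + (e * y) * he * (e * y * (1 - e))
        - (e * y) * he * (u * e * e * y * (1 - e))
  have h := aux_inv (hv_lemma he h1) hnvn
  rw [show e * y * e + (e * y - e * y * e) = e * y from by noncomm_ring] at h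
  exact ⟨_, h⟩

private lemma rinv_right {e y u : A} (he : e * e = e) (h1 : (e - e * y * e) * (e * u * e) = e) :
    ∃ w, (1 - y * e) * w = 1 := by
  have hnvn : (y * e - e * y * e) * (1 - e + e * u * e) * (y * e - e * y * e) = 0 := by
    linear_combination (norm := noncomm_ring)
      (-((1 - e) * y)) * he * ((1 - e) * y * e) + ((1 - e) * y) * he * (u * e * (1 - e) * y * e)
        - ((1 - e) * y * e * u) * he * (y * e)
  have h := aux_inv (hv_lemma he h1) hnvn
  rw [show e * y * e + (y * e - e * y * e) = y * e from by noncomm_ring] at h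
  exact ⟨_, h⟩

private lemma mem_absJacobson_of {R : Type u} [Ring R] {x : R}
    (h : ∀ r : R, ∃ w, (1 - x * r) * w = 1) : x ∈ absJacobson R := by
  simp only [absJacobson, Set.mem_iInter, Set.mem_setOf_eq, SetLike.mem_coe]
  intro m hmc
  by_contra hx
  have hxsup : x ∈ m ⊔ Submodule.span Rᵐᵒᵖ {x} :=
    Submodule.mem_sup_right (Submodule.mem_span_singleton_self x)
  have hlt : m < m ⊔ Submodule.span Rᵐᵒᵖ {x} :=
    lt_of_le_of_ne le_sup_left (fun hEq => hx (by rw [hEq]; exact hxsup))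
  have htop := hmc.2 _ hlt
  have h1 : (1 : R) ∈ m ⊔ Submodule.span Rᵐᵒᵖ {x} := by rw [htop]; trivial
  obtain ⟨k, hk, z, hz, hkz⟩ := Submodule.mem_sup.mp h1
  obtain ⟨c, hc⟩ := Submodule.mem_span_singleton.mp hz
  have hzval : z = x * c.unop := by rw [← hc, MulOpposite.smul_eq_mul_unop]
  have hkval : k = 1 - x * c.unop := by rw [← hzval]; exact eq_sub_of_add_eq hkz
  obtain ⟨w, hw⟩ := h c.unop
  have h1m : (1 : R) ∈ m := by
    have := m.smul_mem (MulOpposite.op w) hk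
    rwa [op_smul_eq_mul, hkval, hw] at this
  apply hmc.1
  rw [eq_top_iff]
  intro v _
  have := m.smul_mem (MulOpposite.op v) h1m
  rwa [op_smul_eq_mul, one_mul] at this

private lemma absJacobson_subset_topJacobson (R : Type u) [Ring R] [TopologicalSpace R] :
    absJacobson R ⊆ topJacobson R := by
  intro x hx
  simp only [absJacobson, Set.mem_iInter, Set.mem_setOf_eq] at hx
  simp only [topJacobson, Set.mem_iInter, Set.mem_setOf_eq]
  exact fun I hI => hx I hI.2

private lemma mem_topJacobson_iff {R : Type u} [Ring R] [TopologicalSpace R] {x : R} :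
    x ∈ topJacobson R ↔
      ∀ I : Submodule Rᵐᵒᵖ R, IsOpen (I : Set R) → IsCoatom I → x ∈ I := by
  simp only [topJacobson, Set.mem_iInter, Set.mem_setOf_eq, SetLike.mem_coe, and_imp]

private lemma topJacobson_mul_right {R : Type u} [Ring R] [TopologicalSpace R] {x : R}
    (hx : x ∈ topJacobson R) (r : R) : x * r ∈ topJacobson R := by
  rw [mem_topJacobson_iff] at hx ⊢
  intro I hIo hIc
  have := I.smul_mem (MulOpposite.op r) (hx I hIo hIc)
  rwa [op_smul_eq_mul] at this

private lemma topJacobson_mul_left {R : Type u} [Ring R] [TopologicalSpace R]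
    [IsTopologicalRing R] {x : R} (hx : x ∈ topJacobson R) (r : R) :
    r * x ∈ topJacobson R := by
  rw [mem_topJacobson_iff] at hx ⊢
  intro m hmo hmc
  by_cases hr : r ∈ m
  · have := m.smul_mem (MulOpposite.op x) hr
    rwa [op_smul_eq_mul] at this
  · let m' : Submodule Rᵐᵒᵖ R :=
      { carrier := {z | r * z ∈ m}
        add_mem' := fun {a b} ha hb => by
          simp only [Set.mem_setOf_eq, mul_add] at *
          exact m.add_mem ha hb
        zero_mem' := by simp only [Set.mem_setOf_eq, mul_zero]; exact m.zero_mem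
        smul_mem' := fun c z hz => by
          simp only [Set.mem_setOf_eq] at hz ⊢
          rw [MulOpposite.smul_eq_mul_unop, ← mul_assoc]
          have := m.smul_mem (MulOpposite.op c.unop) hz
          rwa [op_smul_eq_mul] at this }
    have hm'o : IsOpen (m' : Set R) := by
      have : (m' : Set R) = (fun z => r * z) ⁻¹' (m : Set R) := rfl
      rw [this]
      exact hmo.preimage (continuous_const.mul continuous_id)
    have hm'c : IsCoatom m' := by
      constructor
      · intro htop
        apply hr
        have h1 : (1 : R) ∈ m' := htop ▸ Submodule.mem_top
        have h2 : r * 1 ∈ m := h1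
        rwa [mul_one] at h2
      · intro N hN
        obtain ⟨n, hnN, hnm'⟩ := SetLike.exists_of_lt hN
        have hrn : r * n ∉ m := hnm'
        have hlt : m < m ⊔ Submodule.span Rᵐᵒᵖ {r * n} := by
          refine lt_of_le_of_ne le_sup_left (fun hEq => hrn ?_)
          rw [hEq]
          exact Submodule.mem_sup_right (Submodule.mem_span_singleton_self _)
        have htop := hmc.2 _ hlt
        have hrmem : r ∈ m ⊔ Submodule.span Rᵐᵒᵖ {r * n} := by rw [htop]; trivial
        obtain ⟨k, hk, z, hz, hkz⟩ := Submodule.mem_sup.mp hrmem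
        obtain ⟨c, hc⟩ := Submodule.mem_span_singleton.mp hz
        have hzval : z = r * n * c.unop := by rw [← hc, MulOpposite.smul_eq_mul_unop]
        have hmem1 : (1 : R) - n * c.unop ∈ m' := by
          show r * ((1 : R) - n * c.unop) ∈ m
          have : r * ((1 : R) - n * c.unop) = k := by
            rw [hzval] at hkz
            linear_combination (norm := noncomm_ring) - hkz
          rw [this]; exact hk
        have h1N : (1 : R) ∈ N := by
          have h2 : n * c.unop ∈ N := by
            have := N.smul_mem (MulOpposite.op c.unop) hnN
            rwa [op_smul_eq_mul] at this
          have := N.add_mem (hN.le hmem1) h2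
          simpa using this
        rw [eq_top_iff]
        intro v _
        have := N.smul_mem (MulOpposite.op v) h1N
        rwa [op_smul_eq_mul, one_mul] at this
    exact hx m' hm'o hm'c

private lemma exists_open_coatom {R : Type u} [Ring R] [TopologicalSpace R]
    [IsTopologicalRing R] {J : Submodule Rᵐᵒᵖ R} (hJo : IsOpen (J : Set R))
    (hJ : (1 : R) ∉ J) :
    ∃ M : Submodule Rᵐᵒᵖ R, IsOpen (M : Set R) ∧ IsCoatom M ∧ J ≤ M := by
  have hchainUB : ∀ c ⊆ {I : Submodule Rᵐᵒᵖ R | (1 : R) ∉ I}, IsChain (· ≤ ·) c →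
      ∀ y ∈ c, ∃ ub ∈ {I : Submodule Rᵐᵒᵖ R | (1 : R) ∉ I}, ∀ z ∈ c, z ≤ ub := by
    intro c hcs hchain y hy
    refine ⟨sSup c, ?_, fun z hz => le_sSup hz⟩
    intro h1
    rw [Submodule.mem_sSup_of_directed ⟨y, hy⟩ hchain.directedOn] at h1
    obtain ⟨I, hIc, h1I⟩ := h1
    exact hcs hIc h1I
  obtain ⟨M, hJM, hM⟩ :=
    zorn_le_nonempty₀ {I : Submodule Rᵐᵒᵖ R | (1 : R) ∉ I} hchainUB J hJ
  refine ⟨M, ?_, ⟨?_, ?_⟩, hJM⟩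
  · exact AddSubgroup.isOpen_mono (H₁ := J.toAddSubgroup) (H₂ := M.toAddSubgroup)
      (fun x hx => hJM hx) hJo
  · intro htop
    exact hM.prop (htop ▸ Submodule.mem_top)
  · intro N hN
    have h1N : (1 : R) ∈ N := by
      by_contra h1
      exact absurd (le_antisymm hN.le (hM.2 h1 hN.le)) hN.ne
    rw [eq_top_iff]
    intro v _
    have := N.smul_mem (MulOpposite.op v) h1N
    rwa [op_smul_eq_mul, one_mul] at this

private lemma eq_zero_of_mul_topJacobson_self {R : Type u} [Ring R] [TopologicalSpace R]
    [IsTopologicalRing R] [T2Space R] (hRL : IsRightLinearTopology R) {e h : R}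
    (hh : h ∈ topJacobson R) (heh : e * h = e) : e = 0 := by
  by_contra he0
  let K : Submodule Rᵐᵒᵖ R :=
    { carrier := {z | e * z = 0}
      add_mem' := fun {a b} ha hb => by
        simp only [Set.mem_setOf_eq, mul_add] at *
        rw [ha, hb, add_zero]
      zero_mem' := by simp only [Set.mem_setOf_eq, mul_zero]
      smul_mem' := fun c z hz => by
        simp only [Set.mem_setOf_eq] at hz ⊢
        rw [MulOpposite.smul_eq_mul_unop, ← mul_assoc, hz, zero_mul] }
  have hKc : IsClosed (K : Set R) := by
    have hKset : (K : Set R) = {z : R | e * z = 0} := rfl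
    rw [hKset]
    exact isClosed_eq (continuous_const.mul continuous_id) continuous_const
  have h1K : (1 : R) ∉ K := by
    intro hmem
    apply he0
    have : e * (1 : R) = 0 := hmem
    rwa [mul_one] at this
  have hex : ∃ I : Submodule Rᵐᵒᵖ R, IsOpen (I : Set R) ∧ (1 : R) ∉ K ⊔ I := by
    by_contra hc
    push_neg at hc
    have h1cl : (1 : R) ∈ closure (K : Set R) := by
      rw [mem_closure_iff_nhds]
      intro t ht
      have ht0 : (fun v : R => 1 + v) ⁻¹' t ∈ nhds (0 : R) := by
        apply ContinuousAt.preimage_mem_nhds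
          ((continuous_const.add continuous_id).continuousAt)
        simpa using ht
      obtain ⟨I, hIo, hIsub⟩ := hRL _ ht0
      obtain ⟨k, hk, i, hi, hki⟩ := Submodule.mem_sup.mp (hc I hIo)
      refine ⟨k, ?_, hk⟩
      have hkval : k = 1 + (-i) := by rw [← sub_eq_add_neg]; exact eq_sub_of_add_eq hki
      have : (-i : R) ∈ (I : Set R) := I.neg_mem hi
      have := hIsub this
      rwa [Set.mem_preimage, ← hkval] at this
    rw [hKc.closure_eq] at h1cl
    exact h1K h1cl
  obtain ⟨I, hIo, hI1⟩ := hex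
  have hJo : IsOpen ((K ⊔ I : Submodule Rᵐᵒᵖ R) : Set R) :=
    AddSubgroup.isOpen_mono (H₁ := I.toAddSubgroup)
      (H₂ := (K ⊔ I : Submodule Rᵐᵒᵖ R).toAddSubgroup)
      (fun x hx => Submodule.mem_sup_right hx) hIo
  obtain ⟨M, hMo, hMc, hKM⟩ := exists_open_coatom hJo hI1
  have hhM : h ∈ M := mem_topJacobson_iff.mp hh M hMo hMc
  have h1h : (1 : R) - h ∈ K := by
    show e * ((1 : R) - h) = 0
    rw [mul_sub, mul_one, heh, sub_self]
  have h1M : (1 : R) ∈ M := by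
    have := M.add_mem (hKM (Submodule.mem_sup_left h1h)) hhM
    simpa using this
  apply hMc.1
  rw [eq_top_iff]
  intro v _
  have := M.smul_mem (MulOpposite.op v) h1M
  rwa [op_smul_eq_mul, one_mul] at this

end AuxRadical

theorem corner_absJacobson_eq_corner_topJacobson
    (R : Type u) [Ring R] [UniformSpace R] [IsUniformAddGroup R] [IsTopologicalRing R]
    [T2Space R] [CompleteSpace R] (hRL : IsRightLinearTopology R)
    (hSP : IsTopSemiperfect R) (e : R) (he : IsLocalIdempotent e) :
    (fun x => e * x) '' absJacobson R = (fun x => e * x) '' topJacobson R ∧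
    (fun x => x * e) '' absJacobson R = (fun x => x * e) '' topJacobson R := by
  obtain ⟨heIdem, he0, heLoc⟩ := he
  have heq : e * e = e := heIdem.eq
  have hsub : absJacobson R ⊆ topJacobson R := absJacobson_subset_topJacobson R
  have key_left : ∀ y ∈ topJacobson R, e * y ∈ absJacobson R := by
    intro y hy
    apply mem_absJacobson_of
    intro r
    have hyr : y * r ∈ topJacobson R := topJacobson_mul_right hy r
    rcases heLoc (y * r) with ⟨u, hu1, _⟩ | ⟨u, hu1, _⟩
    · exfalso
      apply he0
      refine eq_zero_of_mul_topJacobson_self hRL (topJacobson_mul_right hyr (e * u * e)) ?_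
      linear_combination (norm := noncomm_ring) hu1 - e * (y * r) * heq * u * e
    · obtain ⟨w, hw⟩ := rinv_left heq hu1
      exact ⟨w, by linear_combination (norm := noncomm_ring) hw⟩
  have key_right : ∀ y ∈ topJacobson R, y * e ∈ absJacobson R := by
    intro y hy
    apply mem_absJacobson_of
    intro r
    apply flip_rinv (a := y * e) (b := r)
    have hry : r * y ∈ topJacobson R := topJacobson_mul_left hy r
    rcases heLoc (r * y) with ⟨u, hu1, _⟩ | ⟨u, hu1, _⟩
    · exfalso
      apply he0
      refine eq_zero_of_mul_topJacobson_self hRL (topJacobson_mul_right hry (e * u * e)) ?_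
      linear_combination (norm := noncomm_ring) hu1 - e * (r * y) * heq * u * e
    · obtain ⟨w, hw⟩ := rinv_right heq hu1
      exact ⟨w, by linear_combination (norm := noncomm_ring) hw⟩
  constructor
  · apply Set.Subset.antisymm (Set.image_mono hsub)
    rintro _ ⟨y, hy, rfl⟩
    exact ⟨e * y, key_left y hy, by show e * (e * y) = e * y; rw [← mul_assoc, heq]⟩
  · apply Set.Subset.antisymm (Set.image_mono hsub)
    rintro _ ⟨y, hy, rfl⟩
    exact ⟨y * e, key_right y hy, by show y * e * e = y * e; rw [mul_assoc, heq]⟩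
end

section
/- Let 𝔯 be a complete, separated, right linear topological ring such that every simple discrete right 𝔯-module admits a projective cover in the category of all right 𝔯-modules. Then for every discrete right 𝔯-module M there exists a family (P_i)_{i∈I} of right 𝔯-modules, each of which is a projective cover of some simple discrete right 𝔯-module, together with a surjective homomorphism of right 𝔯-modules ⊕_{i∈I} P_i → M. -/
open Filter MulOpposite

universe u

/-- Submodules of discrete modules are discrete. -/
theorem IsDiscreteModule.submodule {R : Type u} [Ring R] [TopologicalSpace R]
    {M : Type u} [AddCommGroup M] [Module Rᵐᵒᵖ M] (hM : IsDiscreteModule R M)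
    (X : Submodule Rᵐᵒᵖ M) : IsDiscreteModule R X := by
  intro n
  convert hM n.1 using 1
  ext r
  simp only [Set.mem_setOf_eq]
  rw [← Subtype.coe_inj]
  simp

/-- Quotients of discrete modules are discrete. -/
theorem IsDiscreteModule.quotient {R : Type u} [Ring R] [TopologicalSpace R] [IsTopologicalRing R]
    {M : Type u} [AddCommGroup M] [Module Rᵐᵒᵖ M] (hM : IsDiscreteModule R M)
    (L : Submodule Rᵐᵒᵖ M) : IsDiscreteModule R (M ⧸ L) := by
  intro n
  obtain ⟨y, rfl⟩ := Submodule.Quotient.mk_surjective L n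
  rw [isOpen_iff_forall_mem_open]
  intro r hr
  refine ⟨(Homeomorph.addLeft r) '' {s : R | op s • y = 0}, ?_, ?_, ?_⟩
  · rintro _ ⟨s, hs, rfl⟩
    simp only [Set.mem_setOf_eq] at hr hs ⊢
    have h0 : op s • (Submodule.Quotient.mk y : M ⧸ L) = 0 := by
      rw [← Submodule.Quotient.mk_smul, hs, Submodule.Quotient.mk_zero]
    simp only [Homeomorph.coe_addLeft]
    rw [op_add, add_smul, h0, add_zero]
    exact hr
  · exact (Homeomorph.addLeft r).isOpen_image.2 (hM y)
  · exact ⟨0, by simp, by simp⟩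

/-- Auxiliary structure: a map into `M` from a projective cover of a simple discrete module. -/
structure CoverMap (R : Type u) [Ring R] [TopologicalSpace R]
    (M : Type u) [AddCommGroup M] [Module Rᵐᵒᵖ M] where
  P : Type u
  [acg : AddCommGroup P]
  [mod : Module Rᵐᵒᵖ P]
  S : Type u
  [acgS : AddCommGroup S]
  [modS : Module Rᵐᵒᵖ S]
  g : P →ₗ[Rᵐᵒᵖ] M
  p : P →ₗ[Rᵐᵒᵖ] S
  simple : IsSimpleModule Rᵐᵒᵖ S
  disc : IsDiscreteModule R S
  proj : Module.Projective Rᵐᵒᵖ P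
  surj : Function.Surjective p
  covsup : ∀ K : Submodule Rᵐᵒᵖ P, K ⊔ LinearMap.ker p = ⊤ → K = ⊤

attribute [instance] CoverMap.acg CoverMap.mod CoverMap.acgS CoverMap.modS

set_option maxHeartbeats 1600000 in
theorem discrete_module_generated_by_covers_of_simples
    (R : Type u) [Ring R] [UniformSpace R] [IsUniformAddGroup R] [IsTopologicalRing R]
    [T2Space R] [CompleteSpace R] (hRL : IsRightLinearTopology R)
    (hcov : ∀ (S : Type u) [AddCommGroup S] [Module Rᵐᵒᵖ S],
      IsSimpleModule Rᵐᵒᵖ S → IsDiscreteModule R S → HasProjCover Rᵐᵒᵖ S)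
    (M : Type u) [AddCommGroup M] [Module Rᵐᵒᵖ M] (hM : IsDiscreteModule R M) :
    ∃ (I : Type u) (P : I → Type u) (_ : ∀ i, AddCommGroup (P i)) (_ : ∀ i, Module Rᵐᵒᵖ (P i)),
      (∀ i, ∃ (S : Type u) (_ : AddCommGroup S) (_ : Module Rᵐᵒᵖ S) (p : P i →ₗ[Rᵐᵒᵖ] S),
        IsSimpleModule Rᵐᵒᵖ S ∧ IsDiscreteModule R S ∧
        Module.Projective Rᵐᵒᵖ (P i) ∧ Function.Surjective p ∧
        ∀ K : Submodule Rᵐᵒᵖ (P i), K ⊔ LinearMap.ker p = ⊤ → K = ⊤) ∧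
      ∃ φ : DirectSum I (fun i => P i) →ₗ[Rᵐᵒᵖ] M, Function.Surjective φ := by
  classical
  set T : Set (Submodule Rᵐᵒᵖ M) := {K | ∃ c : CoverMap R M, LinearMap.range c.g = K} with hT
  set N : Submodule Rᵐᵒᵖ M := sSup T with hN
  have hNtop : N = ⊤ := by
    by_contra hne
    obtain ⟨x, hx⟩ : ∃ x : M, x ∉ N := by
      by_contra h
      push_neg at h
      exact hne (Submodule.eq_top_iff'.2 h)
    set X : Submodule Rᵐᵒᵖ M := Submodule.span Rᵐᵒᵖ {x} ⊔ N with hX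
    have hxX : x ∈ X := Submodule.mem_sup_left (Submodule.mem_span_singleton_self x)
    set xX : X := ⟨x, hxX⟩ with hxXdef
    set N' : Submodule Rᵐᵒᵖ X := N.comap X.subtype with hN'
    have hxN' : xX ∉ N' := hx
    have hgen : Submodule.span Rᵐᵒᵖ {xX} ⊔ N' = ⊤ := by
      rw [Submodule.eq_top_iff']
      intro y
      obtain ⟨a, ha, b, hb, hab⟩ := Submodule.mem_sup.1 y.2
      obtain ⟨r, rfl⟩ := Submodule.mem_span_singleton.1 ha
      refine Submodule.mem_sup.2 ⟨r • xX,
        Submodule.smul_mem _ r (Submodule.mem_span_singleton_self xX),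
        ⟨b, (le_sup_right : N ≤ X) hb⟩, hb, ?_⟩
      exact Subtype.ext (by simpa using hab)
    obtain ⟨L, hN'L, hLmax⟩ := zorn_le_nonempty₀ {L : Submodule Rᵐᵒᵖ X | xX ∉ L}
      (fun c hcs hchain y hy => by
        refine ⟨sSup c, ?_, fun z hz => le_sSup hz⟩
        intro hmem
        obtain ⟨K, hKc, hxK⟩ := (Submodule.mem_sSup_of_directed ⟨y, hy⟩ hchain.directedOn).1 hmem
        exact hcs hKc hxK) N' hxN'
    have hcoatom : IsCoatom L := by
      constructor
      · intro h
        exact hLmax.1 (h ▸ Submodule.mem_top)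
      · intro K hK
        have hxK : xX ∈ K := by
          by_contra hxK
          exact hK.not_ge (hLmax.2 hxK hK.le)
        rw [eq_top_iff, ← hgen]
        refine sup_le ?_ (hN'L.trans hK.le)
        rw [Submodule.span_le, Set.singleton_subset_iff]
        exact hxK
    have hsimple : IsSimpleModule Rᵐᵒᵖ (X ⧸ L) := isSimpleModule_iff_isCoatom.2 hcoatom
    have hdisc : IsDiscreteModule R (X ⧸ L) := (hM.submodule X).quotient L
    obtain ⟨P, iacg, imod, p, hproj, hsurj, hsup⟩ := hcov (X ⧸ L) hsimple hdisc
    haveI := hproj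
    obtain ⟨h, hh⟩ := Module.projective_lifting_property L.mkQ p L.mkQ_surjective
    set c : CoverMap R M :=
      { P := P, acg := iacg, mod := imod, S := X ⧸ L, g := X.subtype.comp h, p := p,
        simple := hsimple, disc := hdisc, proj := hproj, surj := hsurj, covsup := hsup } with hc
    have hle : LinearMap.range c.g ≤ N := le_sSup ⟨c, rfl⟩
    haveI : Nontrivial (X ⧸ L) := IsSimpleModule.nontrivial Rᵐᵒᵖ (X ⧸ L)
    obtain ⟨s, hs⟩ := exists_ne (0 : X ⧸ L)
    obtain ⟨z, rfl⟩ := hsurj s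
    have hzN' : h z ∈ N' := Submodule.mem_comap.2 (hle ⟨z, rfl⟩)
    have hzL : h z ∈ L := hN'L hzN'
    refine hs ?_
    rw [← hh]
    exact (Submodule.Quotient.mk_eq_zero L).2 hzL
  refine ⟨{K : Submodule Rᵐᵒᵖ M // K ∈ T}, fun i => (i.2.choose).P,
    fun i => (i.2.choose).acg, fun i => (i.2.choose).mod, ?_, ?_⟩
  · intro i
    exact ⟨(i.2.choose).S, (i.2.choose).acgS, (i.2.choose).modS, (i.2.choose).p,
      (i.2.choose).simple, (i.2.choose).disc, (i.2.choose).proj, (i.2.choose).surj,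
      (i.2.choose).covsup⟩
  · refine ⟨DirectSum.toModule Rᵐᵒᵖ {K : Submodule Rᵐᵒᵖ M // K ∈ T} M
      (fun i => (i.2.choose).g), ?_⟩
    have key : ∀ i : {K : Submodule Rᵐᵒᵖ M // K ∈ T}, LinearMap.range (i.2.choose).g ≤
        LinearMap.range (DirectSum.toModule Rᵐᵒᵖ {K : Submodule Rᵐᵒᵖ M // K ∈ T} M
          (fun i => (i.2.choose).g)) := by
      rintro i _ ⟨y, rfl⟩
      exact ⟨_, DirectSum.toModule_lof Rᵐᵒᵖ (N := M)
        (φ := fun i : {K : Submodule Rᵐᵒᵖ M // K ∈ T} => (i.2.choose).g) i y⟩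
    rw [← LinearMap.range_eq_top, eq_top_iff, ← hNtop]
    refine sSup_le ?_
    rintro K hK
    rw [← hK.choose_spec]
    exact key ⟨K, hK⟩
end

section
/- Let 𝔯 be a complete, separated, right linear topological ring such that every simple discrete right 𝔯-module admits a projective cover in the category of all right 𝔯-modules. Then every finitely generated discrete right 𝔯-module has a projective cover in the category of all right 𝔯-modules. -/
open Filter MulOpposite

universe u

section AuxModule

variable {A : Type u} [Ring A]

/-- A superfluous submodule is contained in every coatom. -/
theorem aux_small_le_coatom {M : Type u} [AddCommGroup M] [Module A M] {K C : Submodule A M}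
    (hK : ∀ X : Submodule A M, X ⊔ K = ⊤ → X = ⊤) (hC : IsCoatom C) : K ≤ C := by
  by_contra h
  have h1 : C < C ⊔ K := lt_of_le_of_ne le_sup_left fun e => h (sup_eq_left.mp e.symm)
  exact hC.1 (hK C (hC.2 _ h1))

/-- The comap of a coatom along a map whose range is not inside it is a coatom. -/
theorem aux_comap_coatom {M P : Type u} [AddCommGroup M] [Module A M] [AddCommGroup P]
    [Module A P] (φ : P →ₗ[A] M) {C : Submodule A M} (hC : IsCoatom C)
    (h : ¬ LinearMap.range φ ≤ C) : IsCoatom (Submodule.comap φ C) := by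
  constructor
  · intro e
    refine h ?_
    rintro _ ⟨x, rfl⟩
    have hx : x ∈ Submodule.comap φ C := e ▸ Submodule.mem_top
    exact hx
  · intro X hX
    have h2 : ¬ Submodule.map φ X ≤ C := fun hm =>
      hX.not_ge ((Submodule.le_comap_map φ X).trans (Submodule.comap_mono hm))
    have h3 : C ⊔ Submodule.map φ X = ⊤ :=
      hC.2 _ (lt_of_le_of_ne le_sup_left fun e => h2 (sup_eq_left.mp e.symm))
    rw [eq_top_iff]
    rintro q -
    have hp : φ q ∈ C ⊔ Submodule.map φ X := h3 ▸ Submodule.mem_top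
    rcases Submodule.mem_sup.mp hp with ⟨c, hc, y, hy, hsum⟩
    rcases Submodule.mem_map.mp hy with ⟨x, hx, rfl⟩
    have hpx : q - x ∈ Submodule.comap φ C := by
      have hqx : φ (q - x) = c := by rw [map_sub, ← hsum, add_sub_cancel_right]
      simpa [Submodule.mem_comap, hqx] using hc
    have hpx2 : q - x ∈ X := hX.le hpx
    have hfin := X.add_mem hpx2 hx
    simpa using hfin

/-- The image of a coatom containing the kernel, under a surjective map, is a coatom. -/
theorem aux_map_coatom {M M' : Type u} [AddCommGroup M] [Module A M] [AddCommGroup M']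
    [Module A M'] (f : M →ₗ[A] M') (hf : Function.Surjective f) {C : Submodule A M}
    (hC : IsCoatom C) (hker : LinearMap.ker f ≤ C) : IsCoatom (Submodule.map f C) := by
  have hcm : Submodule.comap f (Submodule.map f C) = C := by
    rw [Submodule.comap_map_eq, sup_eq_left.mpr hker]
  constructor
  · intro e
    rw [e, Submodule.comap_top] at hcm
    exact hC.1 hcm.symm
  · intro X hX
    have h1 : C < Submodule.comap f X := by
      rw [← hcm]
      refine lt_of_le_of_ne (Submodule.comap_mono hX.le) fun e => ?_
      have h2 := congrArg (Submodule.map f) e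
      rw [Submodule.map_comap_eq_of_surjective hf, Submodule.map_comap_eq_of_surjective hf] at h2
      exact hX.ne h2
    have h2 := hC.2 _ h1
    have h3 := congrArg (Submodule.map f) h2
    rw [Submodule.map_comap_eq_of_surjective hf, Submodule.map_top,
      LinearMap.range_eq_top.mpr hf] at h3
    exact h3

/-- A finite sup of superfluous submodules is superfluous. -/
theorem aux_small_finsetSup {M : Type u} [AddCommGroup M] [Module A M] {ι : Type u}
    (s : Finset ι) (f : ι → Submodule A M)
    (hf : ∀ i ∈ s, ∀ X : Submodule A M, X ⊔ f i = ⊤ → X = ⊤) :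
    ∀ X : Submodule A M, X ⊔ s.sup f = ⊤ → X = ⊤ := by
  classical
  induction s using Finset.induction_on with
  | empty => intro X hX; simpa using hX
  | @insert a s ha ih =>
    intro X hX
    rw [Finset.sup_insert] at hX
    have h1 : (X ⊔ s.sup f) ⊔ f a = ⊤ := by
      rw [sup_assoc, sup_comm (s.sup f) (f a)]
      exact hX
    have h2 := hf a (Finset.mem_insert_self a s) _ h1
    exact ih (fun i hi => hf i (Finset.mem_insert_of_mem hi)) X h2

/-- The image of a superfluous submodule under an injective map is superfluous. -/
theorem aux_small_map {M P : Type u} [AddCommGroup M] [Module A M] [AddCommGroup P] [Module A P]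
    (f : P →ₗ[A] M) (hf : Function.Injective f) {K : Submodule A P}
    (hK : ∀ X : Submodule A P, X ⊔ K = ⊤ → X = ⊤) :
    ∀ X : Submodule A M, X ⊔ Submodule.map f K = ⊤ → X = ⊤ := by
  intro X hX
  have hKU : Submodule.map f K ≤ LinearMap.range f := by
    rw [← Submodule.map_top]; exact Submodule.map_mono le_top
  have hU : LinearMap.range f = Submodule.map f K ⊔ (X ⊓ LinearMap.range f) := by
    have h1 := sup_inf_assoc_of_le (y := X) hKU
    rw [sup_comm X (Submodule.map f K)] at hX
    rw [hX, top_inf_eq] at h1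
    exact h1
  have hY : Submodule.map f (K ⊔ Submodule.comap f (X ⊓ LinearMap.range f))
      = LinearMap.range f := by
    rw [Submodule.map_sup, Submodule.map_comap_eq, inf_comm (LinearMap.range f),
      inf_eq_left.mpr inf_le_right]
    exact hU.symm
  have hY2 : K ⊔ Submodule.comap f (X ⊓ LinearMap.range f) = ⊤ := by
    apply Submodule.map_injective_of_injective hf
    rw [hY, Submodule.map_top]
  rw [sup_comm] at hY2
  have hY3 := hK _ hY2
  have hUX : LinearMap.range f ≤ X := by
    rintro _ ⟨x, rfl⟩
    have hx : x ∈ Submodule.comap f (X ⊓ LinearMap.range f) := hY3 ▸ Submodule.mem_top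
    exact (Submodule.mem_comap.mp hx).1
  rw [eq_top_iff, ← hX]
  exact sup_le le_rfl (hKU.trans hUX)

/-- Lifting a projective cover along a surjection with superfluous kernel. -/
theorem aux_hasProjCover_lift {N : Type u} [AddCommGroup N] [Module A N]
    (W : Submodule A N) (hWsmall : ∀ X : Submodule A N, X ⊔ W = ⊤ → X = ⊤)
    (hB : HasProjCover A (N ⧸ W)) : HasProjCover A N := by
  obtain ⟨P, iAG, iMod, pbar, hproj, hsurj, hsmall⟩ := hB
  letI := iAG; letI := iMod
  obtain ⟨g, hg⟩ := Module.projective_lifting_property W.mkQ pbar (Submodule.mkQ_surjective W)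
  refine ⟨P, iAG, iMod, g, hproj, ?_, ?_⟩
  · rw [← LinearMap.range_eq_top]
    apply hWsmall
    have h1 : Submodule.map W.mkQ (LinearMap.range g) = ⊤ := by
      rw [← LinearMap.range_comp, hg]
      exact LinearMap.range_eq_top.mpr hsurj
    have h2 := Submodule.comap_map_eq W.mkQ (LinearMap.range g)
    rw [h1, Submodule.comap_top, Submodule.ker_mkQ] at h2
    exact h2.symm
  · intro K hK
    apply hsmall
    rw [eq_top_iff, ← hK]
    refine sup_le_sup_left ?_ K
    rw [← hg]
    exact LinearMap.ker_le_ker_comp g W.mkQ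

end AuxModule

section AuxTop

variable (R : Type u) [Ring R] [TopologicalSpace R] [IsTopologicalRing R]

/-- Quotients of discrete modules are discrete. -/
theorem aux_disc_quotient {N : Type u} [AddCommGroup N] [Module Rᵐᵒᵖ N]
    (hd : IsDiscreteModule R N) (W : Submodule Rᵐᵒᵖ N) : IsDiscreteModule R (N ⧸ W) := by
  intro x
  obtain ⟨n, rfl⟩ := W.mkQ_surjective x
  have hU : IsOpen {r : R | op r • n = 0} := hd n
  have heq : {r : R | op r • W.mkQ n = 0}
      = ⋃ a ∈ {r : R | op r • W.mkQ n = 0}, (fun u => a + u) '' {r : R | op r • n = 0} := by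
    ext b
    constructor
    · intro hb
      exact Set.mem_biUnion hb ⟨0, by simp, by simp⟩
    · intro hb
      simp only [Set.mem_iUnion, Set.mem_image] at hb
      obtain ⟨a, ha, u, hu, rfl⟩ := hb
      have hu' : op u • W.mkQ n = 0 := by
        have hmk : W.mkQ (op u • n) = op u • W.mkQ n := by
          simp [Submodule.mkQ_apply, Submodule.Quotient.mk_smul]
        rw [← hmk]
        simp only [Set.mem_setOf_eq] at hu
        rw [hu]
        simp
      show op (a + u) • W.mkQ n = 0
      rw [MulOpposite.op_add, add_smul, ha, hu', add_zero]
  rw [heq]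
  exact isOpen_biUnion fun a _ => (isOpenMap_add_left a) _ hU

/-- Submodules of discrete modules are discrete. -/
theorem aux_disc_submodule {N : Type u} [AddCommGroup N] [Module Rᵐᵒᵖ N]
    (hd : IsDiscreteModule R N) (S : Submodule Rᵐᵒᵖ N) : IsDiscreteModule R ↥S := by
  intro s
  have heq : {r : R | op r • s = 0} = {r : R | op r • (s : N) = 0} := by
    ext r
    simp [Subtype.ext_iff]
  rw [heq]
  exact hd s

/-- The socle of a finitely generated discrete module with zero radical is everything. -/
theorem aux_socle_eq_top
    (hcov : ∀ (S : Type u) [AddCommGroup S] [Module Rᵐᵒᵖ S],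
      IsSimpleModule Rᵐᵒᵖ S → IsDiscreteModule R S → HasProjCover Rᵐᵒᵖ S)
    (B : Type u) [AddCommGroup B] [Module Rᵐᵒᵖ B] [Module.Finite Rᵐᵒᵖ B]
    (hdisc : IsDiscreteModule R B)
    (hrad : Order.radical (Submodule Rᵐᵒᵖ B) = ⊥) :
    sSup {m : Submodule Rᵐᵒᵖ B | IsAtom m} = ⊤ := by
  by_contra hW
  set W := sSup {m : Submodule Rᵐᵒᵖ B | IsAtom m} with hWdef
  have hWlt : W < ⊤ := lt_top_iff_ne_top.mpr hW
  haveI := Submodule.Quotient.nontrivial_iff.mpr hWlt.ne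
  haveI : IsCoatomic (Submodule Rᵐᵒᵖ (B ⧸ W)) :=
    CompleteLattice.coatomic_of_top_compact
      ((Submodule.fg_iff_compact _).mp (Module.finite_def.mp inferInstance))
  have hbot_ne : (⊥ : Submodule Rᵐᵒᵖ (B ⧸ W)) ≠ ⊤ := by
    intro h
    obtain ⟨x, y, hxy⟩ := exists_pair_ne (B ⧸ W)
    have hx : x ∈ (⊥ : Submodule Rᵐᵒᵖ (B ⧸ W)) := h ▸ Submodule.mem_top
    have hy : y ∈ (⊥ : Submodule Rᵐᵒᵖ (B ⧸ W)) := h ▸ Submodule.mem_top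
    rw [Submodule.mem_bot] at hx hy
    exact hxy (hx.trans hy.symm)
  obtain ⟨Cq, hCq, -⟩ :=
    (eq_top_or_exists_le_coatom (⊥ : Submodule Rᵐᵒᵖ (B ⧸ W))).resolve_left hbot_ne
  have hC : IsCoatom (Submodule.comap W.mkQ Cq) := by
    refine aux_comap_coatom W.mkQ hCq ?_
    rw [Submodule.range_mkQ]
    exact fun h => hCq.1 (top_unique h)
  set C := Submodule.comap W.mkQ Cq with hCdef
  have hWC : W ≤ C := Submodule.le_comap_mkQ W Cq
  haveI hSsimple : IsSimpleModule Rᵐᵒᵖ (B ⧸ C) := isSimpleModule_iff_isCoatom.mpr hC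
  have hSdisc : IsDiscreteModule R (B ⧸ C) := aux_disc_quotient R hdisc C
  obtain ⟨P, iAG, iMod, p, hPproj, hpsurj, hpsmall⟩ := hcov (B ⧸ C) hSsimple hSdisc
  letI := iAG; letI := iMod
  obtain ⟨φ, hφ⟩ := Module.projective_lifting_property C.mkQ p (Submodule.mkQ_surjective C)
  haveI := IsSimpleModule.nontrivial Rᵐᵒᵖ (B ⧸ C)
  have hbot_ne' : (⊥ : Submodule Rᵐᵒᵖ (B ⧸ C)) ≠ ⊤ := by
    intro h
    obtain ⟨x, y, hxy⟩ := exists_pair_ne (B ⧸ C)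
    have hx : x ∈ (⊥ : Submodule Rᵐᵒᵖ (B ⧸ C)) := h ▸ Submodule.mem_top
    have hy : y ∈ (⊥ : Submodule Rᵐᵒᵖ (B ⧸ C)) := h ▸ Submodule.mem_top
    rw [Submodule.mem_bot] at hx hy
    exact hxy (hx.trans hy.symm)
  have hker : Submodule.map φ (LinearMap.ker p) = ⊥ := by
    rw [← le_bot_iff, ← hrad]
    unfold Order.radical
    refine le_iInf₂ fun C' hC' => ?_
    by_cases hr : LinearMap.range φ ≤ C'
    · refine le_trans ?_ hr
      rw [← Submodule.map_top]
      exact Submodule.map_mono le_top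
    · have hco := aux_comap_coatom φ hC' hr
      have hle : LinearMap.ker p ≤ Submodule.comap φ C' :=
        aux_small_le_coatom (fun X hX => hpsmall X hX) hco
      exact Submodule.map_le_iff_le_comap.mpr hle
  have hkerle : LinearMap.ker p ≤ LinearMap.ker φ := by
    intro x hx
    have hmem : φ x ∈ Submodule.map φ (LinearMap.ker p) := Submodule.mem_map_of_mem hx
    rw [hker, Submodule.mem_bot] at hmem
    simpa [LinearMap.mem_ker] using hmem
  have hatom : IsAtom (LinearMap.range φ) := by
    constructor
    · intro h0
      have hp0 : LinearMap.range p = ⊥ := by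
        rw [← hφ, LinearMap.range_comp, h0, Submodule.map_bot]
      rw [LinearMap.range_eq_top.mpr hpsurj] at hp0
      exact hbot_ne' hp0.symm
    · intro X hX
      by_cases hY : Submodule.map p (Submodule.comap φ X) = ⊤
      · exfalso
        have h1 : Submodule.comap φ X ⊔ LinearMap.ker p = ⊤ := by
          rw [← Submodule.comap_map_eq p (Submodule.comap φ X), hY, Submodule.comap_top]
        have h2 := hpsmall _ h1
        have h3 : LinearMap.range φ ≤ X := by
          rintro _ ⟨x, rfl⟩
          have hx : x ∈ Submodule.comap φ X := h2 ▸ Submodule.mem_top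
          exact hx
        exact hX.not_ge h3
      · have hYb : Submodule.map p (Submodule.comap φ X) = ⊥ := by
          rcases eq_bot_or_eq_top (Submodule.map p (Submodule.comap φ X)) with h | h
          · exact h
          · exact absurd h hY
        have h3 : Submodule.comap φ X ≤ LinearMap.ker p := by
          intro x hx
          have hmem : p x ∈ Submodule.map p (Submodule.comap φ X) := Submodule.mem_map_of_mem hx
          rw [hYb, Submodule.mem_bot] at hmem
          simpa [LinearMap.mem_ker] using hmem
        have h4 : Submodule.comap φ X ≤ LinearMap.ker φ := h3.trans hkerle
        rw [eq_bot_iff]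
        intro x hx
        obtain ⟨y, rfl⟩ := hX.le hx
        have hy : y ∈ Submodule.comap φ X := hx
        have h5 := h4 hy
        simpa using h5
  have hWle : LinearMap.range φ ≤ W := le_sSup hatom
  have hrange0 : LinearMap.range p = ⊥ := by
    rw [← hφ, LinearMap.range_comp, ← le_bot_iff]
    refine le_trans (Submodule.map_mono (hWle.trans hWC)) ?_
    intro z hz
    rcases Submodule.mem_map.mp hz with ⟨x, hx, rfl⟩
    have hxk : x ∈ LinearMap.ker C.mkQ := by rwa [Submodule.ker_mkQ]
    simpa using hxk
  rw [LinearMap.range_eq_top.mpr hpsurj] at hrange0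
  exact hbot_ne' hrange0.symm

/-- A finitely generated discrete module whose socle is everything has a projective cover. -/
theorem aux_hasProjCover_of_socle_top
    (hcov : ∀ (S : Type u) [AddCommGroup S] [Module Rᵐᵒᵖ S],
      IsSimpleModule Rᵐᵒᵖ S → IsDiscreteModule R S → HasProjCover Rᵐᵒᵖ S)
    (B : Type u) [AddCommGroup B] [Module Rᵐᵒᵖ B] [Module.Finite Rᵐᵒᵖ B]
    (hdisc : IsDiscreteModule R B)
    (htop : sSup {m : Submodule Rᵐᵒᵖ B | IsAtom m} = ⊤) :
    HasProjCover Rᵐᵒᵖ B := by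
  classical
  obtain ⟨s, hs_ind, hs_top, hs_atoms⟩ :=
    exists_sSupIndep_of_sSup_atoms_eq_top htop
  have hcompact : IsCompactElement (⊤ : Submodule Rᵐᵒᵖ B) :=
    (Submodule.fg_iff_compact _).mp (Module.finite_def.mp inferInstance)
  obtain ⟨t, hts, htt⟩ :=
    (CompleteLattice.isCompactElement_iff_exists_le_sSup_of_le_sSup (k := ⊤)).mp hcompact s (by rw [hs_top])
  set ι := {x : Submodule Rᵐᵒᵖ B // x ∈ t} with hιdef
  haveI : Fintype ι := FinsetCoe.fintype t
  have hsim : ∀ i : ι, IsSimpleModule Rᵐᵒᵖ ↥(i.1) := fun i =>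
    isSimpleModule_iff_isAtom.mpr (hs_atoms (hts i.2))
  have hex : ∀ i : ι, ∃ (P : Type u) (_ : AddCommGroup P) (_ : Module Rᵐᵒᵖ P)
      (p : P →ₗ[Rᵐᵒᵖ] ↥(i.1)), Module.Projective Rᵐᵒᵖ P ∧ Function.Surjective p ∧
      ∀ K : Submodule Rᵐᵒᵖ P, K ⊔ LinearMap.ker p = ⊤ → K = ⊤ := fun i =>
    hcov _ (hsim i) (aux_disc_submodule R hdisc i.1)
  choose P iAG iMod p hproj hsurj hsmall using hex
  letI : ∀ i : ι, AddCommGroup (P i) := iAG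
  letI : ∀ i : ι, Module Rᵐᵒᵖ (P i) := iMod
  letI : ∀ i : ι, Module.Projective Rᵐᵒᵖ (P i) := hproj
  haveI hPiProj : Module.Projective Rᵐᵒᵖ (∀ i : ι, P i) :=
    Module.Projective.of_equiv (M := Π₀ i : ι, P i)
      (DirectSum.linearEquivFunOnFintype Rᵐᵒᵖ ι P)
  set F : (∀ i : ι, P i) →ₗ[Rᵐᵒᵖ] B :=
    ∑ i : ι, ((i.1).subtype.comp ((p i).comp (LinearMap.proj i))) with hFdef
  have hFapply : ∀ x : ∀ i : ι, P i, F x = ∑ i : ι, ((p i (x i) : ↥(i.1)) : B) := by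
    intro x
    rw [hFdef]
    simp [LinearMap.sum_apply, LinearMap.comp_apply, LinearMap.proj_apply]
  have hFsingle : ∀ (i : ι) (y : P i), F (Pi.single i y) = ((p i y : ↥(i.1)) : B) := by
    intro i y
    rw [hFapply]
    rw [Finset.sum_eq_single i]
    · rw [Pi.single_eq_same]
    · intro j _ hj
      rw [Pi.single_eq_of_ne hj, map_zero, ZeroMemClass.coe_zero]
    · intro h
      exact absurd (Finset.mem_univ i) h
  have hFrange : LinearMap.range F = ⊤ := by
    rw [eq_top_iff]
    refine le_trans htt ?_
    rw [Finset.sup_le_iff]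
    intro Sb hSb
    simp only [id]
    intro x hx
    obtain ⟨y, hy⟩ := hsurj ⟨Sb, hSb⟩ (⟨x, hx⟩ : ↥Sb)
    refine LinearMap.mem_range.mpr ⟨Pi.single (⟨Sb, hSb⟩ : ι) y, ?_⟩
    rw [hFsingle, hy]
  have hkerF : LinearMap.ker F ≤
      ⨆ i : ι, Submodule.map (LinearMap.single Rᵐᵒᵖ P i) (LinearMap.ker (p i)) := by
    intro x hx
    have hsum : ∑ j : ι, ((p j (x j) : ↥(j.1)) : B) = 0 := by
      rw [← hFapply]
      exact hx
    have hcomp : ∀ i : ι, x i ∈ LinearMap.ker (p i) := by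
      intro i
      have h0 : ((p i (x i) : ↥(i.1)) : B)
          + ∑ j ∈ Finset.univ.erase i, ((p j (x j) : ↥(j.1)) : B) = 0 := by
        have ht0 := Finset.add_sum_erase Finset.univ
          (fun j : ι => ((p j (x j) : ↥(j.1)) : B)) (Finset.mem_univ i)
        rw [hsum] at ht0
        exact ht0
      have hneg : ((p i (x i) : ↥(i.1)) : B)
          = -∑ j ∈ Finset.univ.erase i, ((p j (x j) : ↥(j.1)) : B) :=
        eq_neg_of_add_eq_zero_left h0
      have hmem1 : ((p i (x i) : ↥(i.1)) : B) ∈ i.1 := (p i (x i)).2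
      have hmem2 : ((p i (x i) : ↥(i.1)) : B) ∈ sSup (s \ {i.1}) := by
        rw [hneg]
        refine Submodule.neg_mem _ (Submodule.sum_mem _ fun j hj => ?_)
        have hji : j ≠ i := (Finset.mem_erase.mp hj).1
        have hne : (j.1 : Submodule Rᵐᵒᵖ B) ≠ i.1 := fun e => hji (Subtype.ext e)
        have hjs : (j.1 : Submodule Rᵐᵒᵖ B) ∈ s \ {(i.1 : Submodule Rᵐᵒᵖ B)} := ⟨hts j.2, hne⟩
        exact le_sSup hjs (p j (x j)).2
      have hdisj := hs_ind (hts i.2)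
      have hboth : ((p i (x i) : ↥(i.1)) : B) ∈ i.1 ⊓ sSup (s \ {i.1}) := ⟨hmem1, hmem2⟩
      rw [disjoint_iff.mp hdisj, Submodule.mem_bot] at hboth
      rw [LinearMap.mem_ker]
      exact Subtype.ext (by simpa using hboth)
    have hxsum : x = ∑ i : ι, Pi.single i (x i) := (Finset.univ_sum_single x).symm
    rw [hxsum]
    refine Submodule.sum_mem _ fun i _ => ?_
    refine Submodule.mem_iSup_of_mem i ?_
    exact Submodule.mem_map.mpr ⟨x i, hcomp i, by rw [LinearMap.coe_single]⟩
  have hsingle_inj : ∀ i : ι, Function.Injective (LinearMap.single Rᵐᵒᵖ P i) := by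
    intro i
    have hcoe : ⇑(LinearMap.single Rᵐᵒᵖ P i) = Pi.single i := LinearMap.coe_single Rᵐᵒᵖ P i
    rw [hcoe]
    exact Pi.single_injective i
  have hsmallF : ∀ K : Submodule Rᵐᵒᵖ (∀ i : ι, P i), K ⊔ LinearMap.ker F = ⊤ → K = ⊤ := by
    intro K hK
    have hsup2 : K ⊔ (⨆ i : ι, Submodule.map (LinearMap.single Rᵐᵒᵖ P i)
        (LinearMap.ker (p i))) = ⊤ :=
      top_unique (by rw [← hK]; exact sup_le_sup_left hkerF K)
    rw [← Finset.sup_univ_eq_iSup] at hsup2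
    exact aux_small_finsetSup Finset.univ _
      (fun i _ => aux_small_map _ (hsingle_inj i) (fun X hX => hsmall i X hX)) K hsup2
  exact ⟨(∀ i : ι, P i), inferInstance, inferInstance, F, hPiProj,
    LinearMap.range_eq_top.mp hFrange, hsmallF⟩

end AuxTop

theorem fg_discrete_has_projective_cover_of_simples_have_covers
    (R : Type u) [Ring R] [UniformSpace R] [IsUniformAddGroup R] [IsTopologicalRing R]
    [T2Space R] [CompleteSpace R] (hRL : IsRightLinearTopology R)
    (hcov : ∀ (S : Type u) [AddCommGroup S] [Module Rᵐᵒᵖ S],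
      IsSimpleModule Rᵐᵒᵖ S → IsDiscreteModule R S → HasProjCover Rᵐᵒᵖ S)
    (N : Type u) [AddCommGroup N] [Module Rᵐᵒᵖ N]
    (hfg : Module.Finite Rᵐᵒᵖ N) (hdisc : IsDiscreteModule R N) :
    HasProjCover Rᵐᵒᵖ N := by
  classical
  haveI := hfg
  set rad := Order.radical (Submodule Rᵐᵒᵖ N) with hrad_def
  haveI hcoat : IsCoatomic (Submodule Rᵐᵒᵖ N) :=
    CompleteLattice.coatomic_of_top_compact
      ((Submodule.fg_iff_compact _).mp (Module.finite_def.mp hfg))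
  have hradsmall : ∀ X : Submodule Rᵐᵒᵖ N, X ⊔ rad = ⊤ → X = ⊤ := fun X hX =>
    Order.radical_nongenerating hX
  haveI : Module.Finite Rᵐᵒᵖ (N ⧸ rad) :=
    Module.Finite.of_surjective rad.mkQ (Submodule.mkQ_surjective rad)
  have hdiscQ : IsDiscreteModule R (N ⧸ rad) := aux_disc_quotient R hdisc rad
  have hradQ : Order.radical (Submodule Rᵐᵒᵖ (N ⧸ rad)) = ⊥ := by
    rw [eq_bot_iff]
    intro x hx
    obtain ⟨n, rfl⟩ := Submodule.mkQ_surjective rad x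
    have hn : n ∈ rad := by
      rw [hrad_def]
      unfold Order.radical
      refine (Submodule.mem_iInf _).mpr fun C => (Submodule.mem_iInf _).mpr fun hC => ?_
      have hleC : rad ≤ C := Order.radical_le_coatom hC
      have hCq : IsCoatom (Submodule.map rad.mkQ C) :=
        aux_map_coatom rad.mkQ (Submodule.mkQ_surjective rad) hC
          (by rw [Submodule.ker_mkQ]; exact hleC)
      have hxm : rad.mkQ n ∈ Submodule.map rad.mkQ C := by
        have hle2 : Order.radical (Submodule Rᵐᵒᵖ (N ⧸ rad)) ≤ Submodule.map rad.mkQ C :=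
          Order.radical_le_coatom hCq
        exact hle2 hx
      rcases Submodule.mem_map.mp hxm with ⟨m, hm, hmn⟩
      have hnm : n - m ∈ rad := by
        have : rad.mkQ (n - m) = 0 := by rw [map_sub, hmn, sub_self]
        rwa [← Submodule.ker_mkQ (p := rad), LinearMap.mem_ker]
      have := C.add_mem (hleC hnm) hm
      simpa using this
    have : rad.mkQ n = 0 := by
      rw [← Submodule.ker_mkQ (p := rad), LinearMap.mem_ker] at hn
      exact hn
    rw [this]
    exact Submodule.zero_mem ⊥
  have htop := aux_socle_eq_top R hcov (N ⧸ rad) hdiscQ hradQ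
  exact aux_hasProjCover_lift rad hradsmall
    (aux_hasProjCover_of_socle_top R hcov (N ⧸ rad) hdiscQ htop)
end

section
/- Let A be an associative unital ring, M a left A-module, and R = End_A(M)^op the opposite of the endomorphism ring of M. Then there exists a finite family e_1, …, e_n of pairwise orthogonal local idempotents in R with e_1 + ⋯ + e_n = 1 (i.e., R is semiperfect) if and only if M is a finite direct sum of A-modules each of which has a local endomorphism ring. -/
open Filter MulOpposite

universe u

lemma isLocalIdempotent_op {R : Type*} [Ring R] (f : R) :
    IsLocalIdempotent (op f) ↔ IsLocalIdempotent f := by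
  constructor
  · rintro ⟨h1, h2, h3⟩
    refine ⟨?_, ?_, ?_⟩
    · apply op_injective
      rw [op_mul]
      exact h1
    · simpa using h2
    · intro x
      rcases h3 (op x) with ⟨y, hy1, hy2⟩ | ⟨y, hy1, hy2⟩
      · left
        refine ⟨y.unop, ?_, ?_⟩
        · apply op_injective
          simpa only [op_mul, op_unop, ← mul_assoc] using hy2
        · apply op_injective
          simpa only [op_mul, op_unop, ← mul_assoc] using hy1
      · right
        refine ⟨y.unop, ?_, ?_⟩
        · apply op_injective
          simpa only [op_mul, op_sub, op_unop, ← mul_assoc] using hy2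
        · apply op_injective
          simpa only [op_mul, op_sub, op_unop, ← mul_assoc] using hy1
  · rintro ⟨h1, h2, h3⟩
    refine ⟨?_, ?_, ?_⟩
    · show op f * op f = op f
      rw [← op_mul]
      exact congrArg op h1
    · simpa using h2
    · intro x
      rcases h3 x.unop with ⟨y, hy1, hy2⟩ | ⟨y, hy1, hy2⟩
      · left
        refine ⟨op y, ?_, ?_⟩
        · apply unop_injective
          simpa only [unop_mul, unop_op, ← mul_assoc] using hy2
        · apply unop_injective
          simpa only [unop_mul, unop_op, ← mul_assoc] using hy1
      · right
        refine ⟨op y, ?_, ?_⟩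
        · apply unop_injective
          simpa only [unop_mul, unop_sub, unop_op, ← mul_assoc] using hy2
        · apply unop_injective
          simpa only [unop_mul, unop_sub, unop_op, ← mul_assoc] using hy1

lemma corner_local_iff {A M : Type u} [Ring A] [AddCommGroup M] [Module A M] (f : Module.End A M) (hf : IsIdempotentElem f) :
    IsLocalIdempotent f ↔ IsLocalRing (Module.End A (LinearMap.range f)) := by
  have hff : ∀ m : M, f (f m) = f m := fun m => DFunLike.congr_fun hf m
  set p := LinearMap.range f with hp
  have hfix : ∀ y : p, f (y : M) = (y : M) := by rintro ⟨_, m, rfl⟩; exact hff m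
  set π : M →ₗ[A] p := f.codRestrict p (fun m => LinearMap.mem_range_self f m) with hπdef
  set Φ : Module.End A p → Module.End A M := fun g => p.subtype ∘ₗ g ∘ₗ π with hΦdef
  set Ψ : Module.End A M → Module.End A p := fun x => π ∘ₗ x ∘ₗ p.subtype with hΨdef
  have hπ : ∀ y : p, π (y : M) = y := fun y => Subtype.ext (by
    simp [hπdef, LinearMap.codRestrict_apply, hfix])
  have hπf : ∀ m : M, π (f m) = π m := fun m => Subtype.ext (by
    simp [hπdef, LinearMap.codRestrict_apply, hff])
  have hΨΦ : ∀ g, Ψ (Φ g) = g := by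
    intro g; ext y
    simp [hΨdef, hΦdef, hπ]
  have hΦmul : ∀ g h, Φ (g * h) = Φ g * Φ h := by
    intro g h; ext m
    simp [hΦdef, Module.End.mul_apply, hπ]
  have hΦone : Φ 1 = f := by
    ext m; simp [hΦdef, hπdef]
  have hΦΨ : ∀ x, Φ (Ψ x) = f * x * f := by
    intro x; ext m
    simp [hΦdef, hΨdef, hπdef, Module.End.mul_apply]
  have hΦsub : ∀ g h, Φ (g - h) = Φ g - Φ h := by
    intro g h; ext m
    simp [hΦdef, LinearMap.sub_apply]
  have hcorner : ∀ g, f * Φ g * f = Φ g := by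
    intro g; ext m
    simp [hΦdef, Module.End.mul_apply, hπf, hfix]
  have hΦf : ∀ g, Φ g * f = Φ g := by
    intro g; ext m
    simp [hΦdef, Module.End.mul_apply, hπf]
  have hΨf : Ψ f = 1 := by
    ext y; simp [hΨdef, hπf, hπ]
  have hΨmul : ∀ x y, Ψ x * Ψ y = Ψ (x * f * y) := by
    intro x y; ext z
    simp [hΨdef, hπdef, Module.End.mul_apply]
  constructor
  · rintro ⟨-, hne, hcond⟩
    have hnt : Nontrivial (Module.End A p) := by
      have : ∃ m : M, f m ≠ 0 := by
        by_contra h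
        push_neg at h
        exact hne (LinearMap.ext fun m => h m)
      obtain ⟨m, hm⟩ := this
      refine ⟨1, 0, fun h01 => hm ?_⟩
      have := DFunLike.congr_fun h01 (⟨f m, LinearMap.mem_range_self f m⟩ : p)
      simpa [Subtype.ext_iff] using this
    have key : ∀ (c : Module.End A p) (y : Module.End A M),
        Φ c * (f * y * f) = f → f * y * f * Φ c = f → IsUnit c := by
      intro c y k1 k2
      refine ⟨⟨c, Ψ (f * y * f), ?_, ?_⟩, rfl⟩
      · calc c * Ψ (f * y * f) = Ψ (Φ c) * Ψ (f * y * f) := by rw [hΨΦ]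
          _ = Ψ (Φ c * f * (f * y * f)) := hΨmul _ _
          _ = Ψ (Φ c * (f * y * f)) := by rw [hΦf]
          _ = Ψ f := by rw [k1]
          _ = 1 := hΨf
      · calc Ψ (f * y * f) * c = Ψ (f * y * f) * Ψ (Φ c) := by rw [hΨΦ]
          _ = Ψ (f * y * f * f * Φ c) := hΨmul _ _
          _ = Ψ (f * y * f * Φ c) := by rw [mul_assoc (f * y) f f, hf]
          _ = Ψ f := by rw [k2]
          _ = 1 := hΨf
    refine ⟨fun {a b} hab => ?_⟩
    rcases hcond (Φ a) with ⟨y, h1, h2⟩ | ⟨y, h1, h2⟩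
    · rw [hcorner] at h1 h2
      exact Or.inl (key a y h1 h2)
    · rw [hcorner] at h1 h2
      right
      have hb : Φ b = f - Φ a := by
        rw [eq_sub_of_add_eq' hab, hΦsub, hΦone]
      exact key b y (by rw [hb]; exact h1) (by rw [hb]; exact h2)
  · intro hL
    refine ⟨hf, ?_, ?_⟩
    · intro h0
      obtain ⟨g, h', hgh⟩ := exists_pair_ne (Module.End A p)
      apply hgh
      ext y
      obtain ⟨y, m, hm⟩ := y
      have hy : (⟨y, ⟨m, hm⟩⟩ : p) = 0 := Subtype.ext (show y = (0:M) by rw [← hm, h0]; rfl)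
      rw [hy, map_zero, map_zero]
    · intro x
      have hadd : Ψ x + (1 - Ψ x) = 1 := by abel
      rcases IsLocalRing.isUnit_or_isUnit_of_add_one hadd with hu | hu
      · left
        obtain ⟨u, hu⟩ := hu
        refine ⟨Φ ↑u⁻¹, ?_, ?_⟩
        · rw [hcorner, ← hΦΨ, ← hΦmul, ← hu, u.mul_inv, hΦone]
        · rw [hcorner, ← hΦΨ, ← hΦmul, ← hu, u.inv_mul, hΦone]
      · right
        obtain ⟨u, hu⟩ := hu
        have hsub : f - f * x * f = Φ (1 - Ψ x) := by
          rw [hΦsub, hΦone, hΦΨ]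
        refine ⟨Φ ↑u⁻¹, ?_, ?_⟩
        · rw [hcorner, hsub, ← hΦmul, ← hu, u.mul_inv, hΦone]
        · rw [hcorner, hsub, ← hΦmul, ← hu, u.inv_mul, hΦone]

theorem endRing_semiperfect_iff_finite_direct_sum_of_local
    (A : Type u) (M : Type u) [Ring A] [AddCommGroup M] [Module A M] :
    (∃ (n : ℕ) (e : Fin n → (Module.End A M)ᵐᵒᵖ),
        (∀ i, IsLocalIdempotent (e i)) ∧
        (∀ i j, i ≠ j → e i * e j = 0) ∧
        ∑ i, e i = 1) ↔
      ∃ (n : ℕ) (N : Fin n → Submodule A M),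
        iSupIndep N ∧ iSup N = ⊤ ∧ ∀ i, IsLocalRing (Module.End A (N i)) := by
  constructor
  · rintro ⟨n, e, hloc, horth, hsum⟩
    set F : Fin n → Module.End A M := fun i => (e i).unop with hF
    have hloc' : ∀ i, IsLocalIdempotent (F i) := fun i =>
      (isLocalIdempotent_op (F i)).mp (by rw [op_unop]; exact hloc i)
    have hidem : ∀ i, F i * F i = F i := fun i => (hloc' i).1
    have horth' : ∀ i j, i ≠ j → F i * F j = 0 := fun i j hij => by
      have := congrArg unop (horth j i hij.symm)
      simpa using this
    have hsum' : ∑ i, F i = 1 := by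
      have := congrArg unop hsum
      simpa using this
    refine ⟨n, fun i => LinearMap.range (F i), ?_, ?_, ?_⟩
    · intro i
      rw [Submodule.disjoint_def]
      intro x hxi hxj
      have hker : (⨆ j, ⨆ _ : j ≠ i, LinearMap.range (F j)) ≤ LinearMap.ker (F i) := by
        refine iSup_le fun j => iSup_le fun hj => ?_
        rw [LinearMap.range_le_ker_iff, ← Module.End.mul_eq_comp]
        exact horth' i j hj.symm
      have hx0 : F i x = 0 := hker hxj
      obtain ⟨m, rfl⟩ := hxi
      calc F i m = (F i * F i) m := by rw [hidem]
        _ = F i (F i m) := rfl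
        _ = 0 := hx0
    · rw [eq_top_iff]
      intro m _
      have : m = ∑ i, F i m := by
        rw [← LinearMap.sum_apply, hsum', Module.End.one_apply]
      rw [this]
      exact Submodule.sum_mem _ fun i _ =>
        Submodule.mem_iSup_of_mem i (LinearMap.mem_range_self _ m)
    · exact fun i => (corner_local_iff (F i) (hidem i)).mp (hloc' i)
  · rintro ⟨n, N, hind, hsup, hloc⟩
    have hint : DirectSum.IsInternal N :=
      (DirectSum.isInternal_submodule_iff_iSupIndep_and_iSup_eq_top N).mpr ⟨hind, hsup⟩
    set φ := LinearEquiv.ofBijective (DirectSum.coeLinearMap N) hint with hφ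
    set F : Fin n → Module.End A M := fun i =>
      (N i).subtype ∘ₗ (DirectSum.component A (Fin n) (fun i => ↥(N i)) i) ∘ₗ
        (φ.symm : M →ₗ[A] DirectSum (Fin n) fun i => ↥(N i)) with hFdef
    have hFapp : ∀ (i : Fin n) (m : M), F i m = ((φ.symm m) i : M) := fun i m => rfl
    have hmem : ∀ (i : Fin n) (m : M), F i m ∈ N i := fun i m => ((φ.symm m) i).2
    have hfixF : ∀ (i : Fin n) (x : M), x ∈ N i → F i x = x := by
      intro i x hx
      rw [hFapp, hint.ofBijective_coeLinearMap_of_mem hx]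
    have hkill : ∀ (i j : Fin n), i ≠ j → ∀ x : M, x ∈ N i → F j x = 0 := by
      intro i j hij x hx
      rw [hFapp, hint.ofBijective_coeLinearMap_of_mem_ne hij hx]
      rfl
    have hidem : ∀ i, IsIdempotentElem (F i) := by
      intro i
      ext m
      exact hfixF i (F i m) (hmem i m)
    have hrange : ∀ i, LinearMap.range (F i) = N i := by
      intro i
      refine le_antisymm ?_ ?_
      · rintro x ⟨m, rfl⟩; exact hmem i m
      · intro x hx
        exact ⟨x, hfixF i x hx⟩
    have hsum' : ∑ i, F i = 1 := by
      ext m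
      rw [LinearMap.sum_apply, Module.End.one_apply]
      have h0 : ∑ i, DirectSum.of (fun i => ↥(N i)) i ((φ.symm m) i) = φ.symm m :=
        DirectSum.sum_univ_of (φ.symm m)
      calc ∑ i, F i m = ∑ i, DirectSum.coeLinearMap N
            (DirectSum.of (fun i => ↥(N i)) i ((φ.symm m) i)) := by
            refine Finset.sum_congr rfl fun i _ => ?_
            rw [DirectSum.coeLinearMap_of, hFapp]
        _ = DirectSum.coeLinearMap N (∑ i, DirectSum.of (fun i => ↥(N i)) i ((φ.symm m) i)) :=
            (map_sum _ _ _).symm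
        _ = DirectSum.coeLinearMap N (φ.symm m) := by rw [h0]
        _ = φ (φ.symm m) := rfl
        _ = m := φ.apply_symm_apply m
    refine ⟨n, fun i => op (F i), ?_, ?_, ?_⟩
    · intro i
      refine (isLocalIdempotent_op (F i)).mpr ?_
      refine (corner_local_iff (F i) (hidem i)).mpr ?_
      rw [hrange i]
      exact hloc i
    · intro i j hij
      have : F j * F i = 0 := by
        ext m
        have : F j (F i m) = 0 := hkill i j hij (F i m) (hmem i m)
        simpa using this
      rw [← op_mul, this, op_zero]
    · have h1 : (∑ i, op (F i) : (Module.End A M)ᵐᵒᵖ) = op (∑ i, F i) :=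
        (map_sum (opAddEquiv : Module.End A M ≃+ (Module.End A M)ᵐᵒᵖ) F Finset.univ).symm
      rw [h1, hsum', op_one]
end

section
/- Let A be an associative unital ring and M = M_1 ⊕ ⋯ ⊕ M_n a left A-module decomposed as a finite direct sum of A-modules with local endomorphism rings. Then the Jacobson radical H of the ring R = End_A(M)^op is exactly the set of all endomorphisms h ∈ R such that for every pair of indices j, i ∈ {1, …, n} the component of h from M_j to M_i (i.e., the composition of the inclusion M_j → M, the endomorphism h, and the projection M → M_i) is not an isomorphism of A-modules. -/
open Filter MulOpposite

universe u

def opIdealIso (S : Type u) [Ring S] : Ideal S ≃o Submodule (Sᵐᵒᵖ)ᵐᵒᵖ Sᵐᵒᵖ where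
  toFun J :=
    { carrier := unop ⁻¹' J
      add_mem' := fun ha hb => J.add_mem ha hb
      zero_mem' := J.zero_mem
      smul_mem' := fun r x hx => by
        show unop (r • x) ∈ J
        rw [← r.op_unop, op_smul_eq_mul, unop_mul]
        exact J.mul_mem_left _ hx }
  invFun I :=
    { carrier := op ⁻¹' I
      add_mem' := fun ha hb => I.add_mem ha hb
      zero_mem' := I.zero_mem
      smul_mem' := fun r x hx => by
        have := I.smul_mem (op (op r)) hx
        rwa [op_smul_eq_mul, ← op_mul] at this }
  left_inv := fun J => rfl
  right_inv := fun I => SetLike.coe_injective (by ext x; exact ⟨fun h => by simpa using h, fun h => by simpa using h⟩)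
  map_rel_iff' := by
    intro J J'
    constructor
    · intro hle x hx
      exact hle (show unop (op x) ∈ J from hx)
    · intro h x hx; exact h hx

theorem mem_absJacobson_iff {S : Type u} [Ring S] (h : Sᵐᵒᵖ) :
    h ∈ absJacobson Sᵐᵒᵖ ↔ h.unop ∈ Ideal.jacobson (⊥ : Ideal S) := by
  rw [absJacobson, Ideal.jacobson, Submodule.mem_sInf]
  simp only [Set.mem_iInter, Set.mem_setOf_eq, SetLike.mem_coe]
  constructor
  · rintro H J ⟨-, hJ⟩
    have : IsCoatom (opIdealIso S J) := by
      rw [OrderIso.isCoatom_iff]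
      exact Ideal.isMaximal_def.mp hJ
    exact H _ this
  · intro H I hI
    have : ((opIdealIso S).symm I).IsMaximal := by
      rw [Ideal.isMaximal_def, ← OrderIso.isCoatom_iff (opIdealIso S)]
      simpa using hI
    have hm := H _ ⟨bot_le, this⟩
    -- h.unop ∈ (opIdealIso S).symm I means op (h.unop) ∈ I, i.e. h ∈ I
    exact hm

open Function

variable {A : Type u} [Ring A] {X Y Z : Type u}
  [AddCommGroup X] [Module A X] [AddCommGroup Y] [Module A Y] [AddCommGroup Z] [Module A Z]

lemma nontrivial_of_endLocal (hX : IsLocalRing (Module.End A X)) : Nontrivial X := by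
  by_contra hc
  rw [not_nontrivial_iff_subsingleton] at hc
  haveI := hX.toNontrivial
  exact one_ne_zero (α := Module.End A X) (LinearMap.ext fun x => Subsingleton.elim _ _)

lemma noniso_zero (hX : IsLocalRing (Module.End A X)) : ¬Bijective (0 : X →ₗ[A] Y) := by
  haveI := nontrivial_of_endLocal hX
  obtain ⟨a, b, hab⟩ := exists_pair_ne X
  intro hb
  exact hab (hb.1 (by simp))

lemma noniso_add (hX : IsLocalRing (Module.End A X)) {f g : X →ₗ[A] Y}
    (hf : ¬Bijective f) (hg : ¬Bijective g) : ¬Bijective (f + g) := by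
  intro hfg
  haveI := hX
  let e := LinearEquiv.ofBijective (f + g) hfg
  set a : Module.End A X := e.symm.toLinearMap ∘ₗ f with ha
  set b : Module.End A X := e.symm.toLinearMap ∘ₗ g with hb
  have hsum : a + b = 1 := by
    ext x
    show e.symm (f x) + e.symm (g x) = x
    rw [← map_add, ← LinearMap.add_apply]
    exact e.symm_apply_apply x
  rcases hX.isUnit_or_isUnit_of_add_one hsum with h | h
  · apply hf
    have hb2 := (Module.End.isUnit_iff a).mp h
    have hfa : ⇑f = ⇑e ∘ ⇑a := by
      funext x
      show f x = e (e.symm (f x))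
      rw [e.apply_symm_apply]
    rw [hfa]
    exact e.bijective.comp hb2
  · apply hg
    have hb2 := (Module.End.isUnit_iff b).mp h
    have hfa : ⇑g = ⇑e ∘ ⇑b := by
      funext x
      show g x = e (e.symm (g x))
      rw [e.apply_symm_apply]
    rw [hfa]
    exact e.bijective.comp hb2

lemma idem_zero_or_one (hY : IsLocalRing (Module.End A Y)) {e : Module.End A Y}
    (he : e * e = e) : e = 0 ∨ e = 1 := by
  rcases hY.isUnit_or_isUnit_of_add_one (a := e) (b := 1 - e) (by abel) with h | h
  · exact Or.inr (h.mul_left_cancel (by rw [he, mul_one]))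
  · refine Or.inl ?_
    have h1 : (1 - e) * (1 - e) = (1 - e) * 1 := by
      rw [mul_one]
      calc (1 - e) * (1 - e) = (1 - e) - (1 - e) * e := by rw [mul_sub, mul_one]
        _ = 1 - e := by rw [sub_mul, one_mul, he, sub_self, sub_zero]
    have := h.mul_left_cancel h1
    rwa [sub_eq_self] at this

lemma noniso_comp (hX : IsLocalRing (Module.End A X)) (hY : IsLocalRing (Module.End A Y))
    {b : X →ₗ[A] Y} (hb : ¬Bijective b) (a : Y →ₗ[A] Z) : ¬Bijective (a ∘ₗ b) := by
  intro hab
  let e := LinearEquiv.ofBijective (a ∘ₗ b) hab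
  set w : Module.End A Y := b ∘ₗ e.symm.toLinearMap ∘ₗ a with hw
  have hkey : ∀ x : X, e.symm (a (b x)) = x := fun x => e.symm_apply_apply x
  have hid : w * w = w := by
    ext y
    show b (e.symm (a (b (e.symm (a y))))) = b (e.symm (a y))
    rw [hkey]
  rcases idem_zero_or_one hY hid with h0 | h1
  · have hb0 : ∀ x, b x = 0 := by
      intro x
      have : b x = w (b x) := by
        show b x = b (e.symm (a (b x)))
        rw [hkey]
      rw [this, h0]
      rfl
    haveI := nontrivial_of_endLocal hX
    obtain ⟨p, q, hpq⟩ := exists_pair_ne X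
    exact hpq (hab.1 (by show a (b p) = a (b q); rw [hb0, hb0]))
  · apply hb
    rw [Function.bijective_iff_has_inverse]
    refine ⟨fun y => e.symm (a y), fun x => hkey x, fun y => ?_⟩
    show w y = y
    rw [h1]
    rfl

lemma noniso_neg {f : X →ₗ[A] Y} (hf : ¬Bijective f) : ¬Bijective (-f) := by
  intro h
  apply hf
  have : ⇑f = Neg.neg ∘ ⇑(-f) := by funext x; simp
  rw [this]
  exact (Equiv.neg Y).bijective.comp h

lemma noniso_sum (hX : IsLocalRing (Module.End A X)) {ι : Type*} (s : Finset ι)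
    (F : ι → (X →ₗ[A] Y)) (h : ∀ k ∈ s, ¬Bijective (F k)) :
    ¬Bijective ((∑ k ∈ s, F k : X →ₗ[A] Y)) := by
  classical
  induction s using Finset.induction_on with
  | empty => simpa using noniso_zero hX
  | insert _ _ hns ih =>
    rw [Finset.sum_insert hns]
    exact noniso_add hX (h _ (Finset.mem_insert_self _ _))
      (ih fun k hk => h k (Finset.mem_insert_of_mem hk))
open LinearMap
section Psi
variable {n : ℕ} (N : Fin (n + 1) → Type u) [∀ i, AddCommGroup (N i)] [∀ i, Module A (N i)]

def psi : (∀ i, N i) ≃ₗ[A] N 0 × (∀ i : Fin n, N i.succ) :=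
  LinearEquiv.ofLinear
    (LinearMap.prod (LinearMap.proj 0) (LinearMap.pi fun i => LinearMap.proj i.succ))
    (LinearMap.pi fun k => Fin.cases (LinearMap.fst A (N 0) (∀ i : Fin n, N i.succ))
      (fun i => (LinearMap.proj i).comp (LinearMap.snd A (N 0) (∀ i : Fin n, N i.succ))) k)
    (by
      apply LinearMap.ext
      rintro ⟨l, x⟩
      refine Prod.ext ?_ (funext fun i => ?_)
      · simp [LinearMap.pi_apply]
      · simp [LinearMap.pi_apply])
    (by
      apply LinearMap.ext
      intro x
      funext k
      induction k using Fin.cases with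
      | zero => simp [LinearMap.pi_apply]
      | succ i => simp [LinearMap.pi_apply])

@[simp] lemma fst_psi : (LinearMap.fst A (N 0) (∀ i : Fin n, N i.succ)) ∘ₗ (psi N).toLinearMap
    = LinearMap.proj 0 := rfl

@[simp] lemma proj_snd_psi (i : Fin n) :
    (LinearMap.proj i) ∘ₗ (LinearMap.snd A (N 0) (∀ i : Fin n, N i.succ)) ∘ₗ (psi N).toLinearMap
    = LinearMap.proj i.succ := rfl

@[simp] lemma psi_symm_inl : (psi N).symm.toLinearMap ∘ₗ LinearMap.inl A (N 0) (∀ i : Fin n, N i.succ)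
    = LinearMap.single A N 0 := by
  apply LinearMap.ext; intro l; funext k
  induction k using Fin.cases with
  | zero => simp [psi, LinearMap.pi_apply]
  | succ i => simp [psi, LinearMap.pi_apply, Pi.single_eq_of_ne (Fin.succ_ne_zero i)]

@[simp] lemma psi_symm_inr_single (j : Fin n) :
    (psi N).symm.toLinearMap ∘ₗ (LinearMap.inr A (N 0) (∀ i : Fin n, N i.succ))
      ∘ₗ LinearMap.single A (fun i : Fin n => N i.succ) j
    = LinearMap.single A N j.succ := by
  apply LinearMap.ext; intro x; funext k
  induction k using Fin.cases with
  | zero => simp [psi, LinearMap.pi_apply, Pi.single_eq_of_ne (Fin.succ_ne_zero j).symm]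
  | succ i =>
    by_cases hij : j = i
    · subst hij; simp [psi, LinearMap.pi_apply]
    · have h2 : j.succ ≠ i.succ := fun hc => hij (Fin.succ_injective n hc)
      simp [psi, LinearMap.pi_apply, Pi.single_eq_of_ne (Ne.symm hij),
        Pi.single_eq_of_ne h2.symm]

end Psi

section Mk2
variable {L Q : Type u} [AddCommGroup L] [Module A L] [AddCommGroup Q] [Module A Q]

def mk2 (p : L →ₗ[A] L) (q : Q →ₗ[A] L) (r : L →ₗ[A] Q) (s : Q →ₗ[A] Q) :
    (L × Q) →ₗ[A] (L × Q) :=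
  LinearMap.coprod (LinearMap.prod p r) (LinearMap.prod q s)

@[simp] lemma mk2_apply (p : L →ₗ[A] L) (q : Q →ₗ[A] L) (r : L →ₗ[A] Q) (s : Q →ₗ[A] Q)
    (l : L) (x : Q) : mk2 p q r s (l, x) = (p l + q x, r l + s x) := rfl

lemma eq_mk2 (T : (L × Q) →ₗ[A] (L × Q)) :
    T = mk2 ((fst A L Q) ∘ₗ T ∘ₗ inl A L Q) ((fst A L Q) ∘ₗ T ∘ₗ inr A L Q)
      ((snd A L Q) ∘ₗ T ∘ₗ inl A L Q) ((snd A L Q) ∘ₗ T ∘ₗ inr A L Q) := by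
  apply LinearMap.ext
  rintro ⟨l, x⟩
  have : (l, x) = (l, (0 : Q)) + ((0 : L), x) := by simp
  rw [this, map_add, map_add]
  simp only [mk2_apply, map_zero, add_zero, zero_add]
  refine congrArg₂ (· + ·) (Prod.ext ?_ ?_) (Prod.ext ?_ ?_) <;> simp

lemma bij_mk2_lowerUni (c : L →ₗ[A] Q) : Bijective (mk2 1 0 c 1) := by
  rw [bijective_iff_has_inverse]
  refine ⟨fun z => (z.1, z.2 - c z.1), ?_, ?_⟩
  · rintro ⟨l, x⟩; simp
  · rintro ⟨l, x⟩; simp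

lemma bij_mk2_upperUni (d : Q →ₗ[A] L) : Bijective (mk2 1 d 0 1) := by
  rw [bijective_iff_has_inverse]
  refine ⟨fun z => (z.1 - d z.2, z.2), ?_, ?_⟩
  · rintro ⟨l, x⟩; simp
  · rintro ⟨l, x⟩; simp

lemma bij_mk2_diag {p : L →ₗ[A] L} {s : Q →ₗ[A] Q} (hp : Bijective p) (hs : Bijective s) :
    Bijective (mk2 p 0 0 s) := by
  have : ⇑(mk2 p 0 0 s) = Prod.map ⇑p ⇑s := by
    funext z
    cases z
    simp [Prod.map]
  rw [this]
  exact hp.prodMap hs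

end Mk2

section Main
variable (A)

lemma bij_one_sub (n : ℕ) :
    ∀ (N : Fin n → Type u) [∀ i, AddCommGroup (N i)] [∀ i, Module A (N i)],
      (∀ i, IsLocalRing (Module.End A (N i))) →
      ∀ f : Module.End A (∀ i, N i),
      (∀ j i : Fin n, ¬ Bijective ((proj i : _ →ₗ[A] N i) ∘ₗ f ∘ₗ single A N j)) →
      Bijective ((1 : Module.End A (∀ i, N i)) - f) := by
  induction n with
  | zero =>
    intro N _ _ _ f _
    haveI : Subsingleton (∀ i : Fin 0, N i) := ⟨fun a b => funext fun i => i.elim0⟩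
    exact ⟨fun a b _ => Subsingleton.elim a b, fun y => ⟨y, Subsingleton.elim _ _⟩⟩
  | succ n ih =>
    intro N instAC instM hloc f hf
    set L := N 0 with hL
    set Q := (∀ i : Fin n, N i.succ) with hQ
    let ψ : (∀ i, N i) ≃ₗ[A] L × Q := psi N
    set G : Module.End A (L × Q) := ψ.toLinearMap ∘ₗ ((1 : Module.End A (∀ i, N i)) - f) ∘ₗ ψ.symm.toLinearMap with hG
    set p := fst A L Q ∘ₗ G ∘ₗ inl A L Q with hpdef
    set q := fst A L Q ∘ₗ G ∘ₗ inr A L Q with hqdef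
    set r := snd A L Q ∘ₗ G ∘ₗ inl A L Q with hrdef
    set s := snd A L Q ∘ₗ G ∘ₗ inr A L Q with hsdef
    have hGmk : G = mk2 p q r s := eq_mk2 G
    have hsyml : ∀ l : L, ψ.symm ((l, (0 : Q))) = Pi.single 0 l := by
      intro l
      exact LinearMap.ext_iff.mp (psi_symm_inl (A := A) N) l
    have hpc : p = (1 : Module.End A L) - ((proj 0 : _ →ₗ[A] N 0) ∘ₗ f ∘ₗ single A N 0) := by
      apply LinearMap.ext
      intro l
      show (ψ ((1 - f) (ψ.symm (l, 0)))).1 = l - (f (Pi.single 0 l)) 0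
      rw [hsyml]
      show Pi.single 0 l 0 - (f (Pi.single 0 l)) 0 = l - (f (Pi.single 0 l)) 0
      rw [Pi.single_eq_same]
    have hp : Bijective p := by
      have hc : ¬ IsUnit ((proj 0 : _ →ₗ[A] N 0) ∘ₗ f ∘ₗ single A N 0) :=
        fun hu => hf 0 0 ((Module.End.isUnit_iff _).mp hu)
      refine (Module.End.isUnit_iff p).mp ?_
      rw [hpc]
      rcases (hloc 0).isUnit_or_isUnit_of_add_one
        (a := (proj 0 : _ →ₗ[A] N 0) ∘ₗ f ∘ₗ single A N 0)
        (b := 1 - ((proj 0 : _ →ₗ[A] N 0) ∘ₗ f ∘ₗ single A N 0)) (by abel) with h | h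
      · exact absurd h hc
      · exact h
    let u : L ≃ₗ[A] L := LinearEquiv.ofBijective p hp
    have hup : ∀ y, p (u.symm y) = y := fun y => u.apply_symm_apply y
    have hpu : ∀ l, u.symm (p l) = l := fun l => u.symm_apply_apply l
    set S : Module.End A Q := s - r ∘ₗ u.symm.toLinearMap ∘ₗ q with hSdef
    have hfact : G = (mk2 1 0 (r ∘ₗ u.symm.toLinearMap) 1) ∘ₗ (mk2 p 0 0 S)
        ∘ₗ (mk2 1 (u.symm.toLinearMap ∘ₗ q) 0 1) := by
      rw [hGmk]
      apply LinearMap.ext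
      rintro ⟨l, x⟩
      simp only [LinearMap.comp_apply, mk2_apply, Module.End.one_apply, LinearMap.zero_apply,
        LinearMap.coe_comp, Function.comp_apply, LinearEquiv.coe_coe, zero_add, add_zero,
        LinearMap.sub_apply, hSdef]
      refine Prod.ext ?_ ?_
      · show p l + q x = p (l + u.symm (q x))
        rw [map_add, hup]
      · show r l + s x = r (u.symm (p (l + u.symm (q x)))) + (s x - r (u.symm (q x)))
        rw [map_add, hup, map_add, hpu, map_add]
        abel
    have hScomp : ∀ j i : Fin n, ¬ Bijective ((proj i : _ →ₗ[A] N i.succ) ∘ₗ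
        ((1 : Module.End A Q) - S) ∘ₗ single A (fun k : Fin n => N k.succ) j) := by
      intro j i
      have hsymr : ∀ x : N j.succ, ψ.symm (((0 : L), Pi.single j x)) = Pi.single j.succ x :=
        fun x => LinearMap.ext_iff.mp (psi_symm_inr_single (A := A) N j) x
      have hdelta : ∀ x : N j.succ,
          (Pi.single (M := fun k : Fin n => N k.succ) j x) i = Pi.single j.succ x i.succ := by
        intro x
        by_cases hij : j = i
        · subst hij; simp
        · rw [Pi.single_eq_of_ne (Ne.symm hij),
            Pi.single_eq_of_ne (fun hc => hij (Fin.succ_injective n hc).symm)]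
      have hzero : ∀ x : N j.succ, Pi.single j.succ x 0 = (0 : N 0) :=
        fun x => Pi.single_eq_of_ne (Ne.symm (Fin.succ_ne_zero j)) x
      have hkey : (proj i : _ →ₗ[A] N i.succ) ∘ₗ ((1 : Module.End A Q) - S)
            ∘ₗ single A (fun k : Fin n => N k.succ) j
          = ((proj i.succ : _ →ₗ[A] N i.succ) ∘ₗ f ∘ₗ single A N j.succ)
            + ((proj i : _ →ₗ[A] N i.succ) ∘ₗ r ∘ₗ u.symm.toLinearMap)
              ∘ₗ (-(((proj 0 : _ →ₗ[A] N 0) ∘ₗ f ∘ₗ single A N j.succ))) := by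
        apply LinearMap.ext
        intro x
        show Pi.single (M := fun k : Fin n => N k.succ) j x i -
            ((ψ ((1 - f) (ψ.symm ((0 : L), Pi.single j x)))).2 i
              - r (u.symm ((ψ ((1 - f) (ψ.symm ((0 : L), Pi.single j x)))).1)) i)
          = (f (Pi.single (M := N) j.succ x)) i.succ
            + r (u.symm (-((f (Pi.single (M := N) j.succ x)) 0))) i
        rw [hsymr]
        show Pi.single (M := fun k : Fin n => N k.succ) j x i -
            ((Pi.single (M := N) j.succ x i.succ - (f (Pi.single (M := N) j.succ x)) i.succ)
              - r (u.symm (Pi.single (M := N) j.succ x 0 - (f (Pi.single (M := N) j.succ x)) 0)) i)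
          = (f (Pi.single (M := N) j.succ x)) i.succ
            + r (u.symm (-((f (Pi.single (M := N) j.succ x)) 0))) i
        rw [hdelta, hzero, zero_sub]
        abel
      rw [hkey]
      exact noniso_add (hloc j.succ) (hf j.succ i.succ)
        (noniso_comp (hloc j.succ) (hloc 0) (noniso_neg (hf j.succ 0)) _)
    have hS : Bijective S := by
      have := ih (fun i => N i.succ) (fun i => hloc i.succ)
        ((1 : Module.End A Q) - S) hScomp
      rwa [sub_sub_cancel] at this
    have hGbij : Bijective G := by
      rw [hfact]
      simp only [LinearMap.coe_comp]
      exact (bij_mk2_lowerUni (A := A) _).comp ((bij_mk2_diag hp hS).comp (bij_mk2_upperUni (A := A) _))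
    have hcoe : ⇑((1 : Module.End A (∀ i, N i)) - f) = ⇑ψ.symm ∘ ⇑G ∘ ⇑ψ := by
      funext x
      simp [hG]
    rw [hcoe]
    exact ψ.symm.bijective.comp (hGbij.comp ψ.bijective)

end Main

section Jac
variable (A)

lemma comp_closure (n : ℕ) (N : Fin n → Type u) [∀ i, AddCommGroup (N i)] [∀ i, Module A (N i)]
    (hloc : ∀ i, IsLocalRing (Module.End A (N i))) (rr f : Module.End A (∀ i, N i))
    (hf : ∀ j i : Fin n, ¬ Bijective ((proj i : _ →ₗ[A] N i) ∘ₗ f ∘ₗ single A N j)) :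
    ∀ j i : Fin n, ¬ Bijective ((proj i : _ →ₗ[A] N i) ∘ₗ (rr * f) ∘ₗ single A N j) := by
  intro j i
  have hsplit : (proj i : _ →ₗ[A] N i) ∘ₗ (rr * f) ∘ₗ single A N j
      = ∑ k : Fin n, ((proj i : _ →ₗ[A] N i) ∘ₗ rr ∘ₗ single A N k)
          ∘ₗ ((proj k : _ →ₗ[A] N k) ∘ₗ f ∘ₗ single A N j) := by
    apply LinearMap.ext
    intro x
    rw [LinearMap.sum_apply]
    show rr (f (single A N j x)) i = _
    have : ∀ k : Fin n, (((proj i : _ →ₗ[A] N i) ∘ₗ rr ∘ₗ single A N k)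
        ∘ₗ ((proj k : _ →ₗ[A] N k) ∘ₗ f ∘ₗ single A N j)) x
        = (rr (Pi.single k ((f (single A N j x)) k))) i := fun k => rfl
    simp_rw [this]
    rw [← Finset.sum_apply, ← map_sum, Finset.univ_sum_single]
  rw [hsplit]
  exact noniso_sum (hloc j) Finset.univ _
    (fun k _ => noniso_comp (hloc j) (hloc k) (hf j k) _)

theorem mem_jacobson_pi_iff (n : ℕ) (N : Fin n → Type u) [∀ i, AddCommGroup (N i)]
    [∀ i, Module A (N i)] (hloc : ∀ i, IsLocalRing (Module.End A (N i)))
    (f : Module.End A (∀ i, N i)) :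
    f ∈ Ideal.jacobson (⊥ : Ideal (Module.End A (∀ i, N i))) ↔
      ∀ j i : Fin n, ¬ Bijective ((proj i : _ →ₗ[A] N i) ∘ₗ f ∘ₗ single A N j) := by
  constructor
  · intro hmem j i hbij
    set c := (proj i : _ →ₗ[A] N i) ∘ₗ f ∘ₗ single A N j with hc
    let w := (LinearEquiv.ofBijective c hbij).symm
    set g : Module.End A (∀ i, N i) := single A N j ∘ₗ w.toLinearMap ∘ₗ proj i with hg
    obtain ⟨z, hz⟩ := (Ideal.mem_jacobson_iff.mp hmem) (-g)
    rw [Submodule.mem_bot] at hz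
    have hz1 : z * (1 - g * f) = 1 := by
      have h0 : z * -g * f + z = 1 := by
        have := sub_eq_zero.mp hz
        linear_combination (norm := noncomm_ring) this
      calc z * (1 - g * f) = z * -g * f + z := by noncomm_ring
        _ = 1 := h0
    have hgf : ∀ x : N j, (g * f) ((single A N j) x) = (single A N j) x := by
      intro x
      show single A N j (w (proj i (f (single A N j x)))) = single A N j x
      congr 1
      exact (LinearEquiv.ofBijective c hbij).symm_apply_apply x
    have hx0 : ∀ x : N j, (single A N j) x = 0 := by
      intro x
      have h1 : (z * (1 - g * f)) (single A N j x) = single A N j x := by rw [hz1]; rfl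
      have h2 : ((1 : Module.End A (∀ i, N i)) - g * f) (single A N j x) = 0 := by
        rw [LinearMap.sub_apply, Module.End.one_apply, hgf, sub_self]
      rw [Module.End.mul_apply, h2, map_zero] at h1
      exact h1.symm
    haveI := nontrivial_of_endLocal (hloc j)
    apply one_ne_zero (α := Module.End A (N j))
    apply LinearMap.ext
    intro x
    have h3 := congrArg (fun t => t j) (hx0 x)
    simpa using h3
  · intro hI
    rw [Ideal.jacobson, Ideal.mem_sInf]
    rintro K ⟨-, hK⟩
    by_contra hfK
    have hlt : K ⊔ Ideal.span {f} = ⊤ := by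
      refine (Ideal.isMaximal_def.mp hK).2 _ (lt_of_le_of_ne le_sup_left ?_)
      intro hEq
      exact hfK (hEq ▸ Submodule.mem_sup_right (Ideal.subset_span (Set.mem_singleton f)))
    have h1mem : (1 : Module.End A (∀ i, N i)) ∈ K ⊔ Ideal.span {f} := by
      rw [hlt]; exact Submodule.mem_top
    obtain ⟨m, hm, y, hy, hsum⟩ := Submodule.mem_sup.mp h1mem
    obtain ⟨rr, hrr⟩ := Submodule.mem_span_singleton.mp hy
    have hin := comp_closure A n N hloc rr f hI
    have hbij : Bijective ((1 : Module.End A (∀ i, N i)) - rr * f) :=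
      bij_one_sub A n N hloc (rr * f) hin
    have hunit : IsUnit ((1 : Module.End A (∀ i, N i)) - rr * f) :=
      (Module.End.isUnit_iff _).mpr hbij
    obtain ⟨v, hv⟩ := hunit.exists_left_inv
    have hmK : (1 : Module.End A (∀ i, N i)) - rr * f ∈ K := by
      have heq : (1 : Module.End A (∀ i, N i)) - rr * f = m := by
        rw [← hsum, ← hrr, smul_eq_mul]
        abel
      rw [heq]; exact hm
    have h1K := K.mul_mem_left v hmK
    rw [hv] at h1K
    exact (Ideal.isMaximal_def.mp hK).1 ((Ideal.eq_top_iff_one K).mpr h1K)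

end Jac

section Final
variable {M M₂ : Type u} [AddCommGroup M] [Module A M] [AddCommGroup M₂] [Module A M₂]

def conjRing (φ : M ≃ₗ[A] M₂) : Module.End A M ≃+* Module.End A M₂ where
  toFun g := φ.toLinearMap ∘ₗ g ∘ₗ φ.symm.toLinearMap
  invFun g := φ.symm.toLinearMap ∘ₗ g ∘ₗ φ.toLinearMap
  left_inv g := by apply LinearMap.ext; intro x; simp
  right_inv g := by apply LinearMap.ext; intro x; simp
  map_add' g h := by apply LinearMap.ext; intro x; simp
  map_mul' g h := by apply LinearMap.ext; intro x; simp [Module.End.mul_apply]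

end Final


theorem mem_absJacobson_iff_matrix_of_nonisos_finite
    (A : Type u) (n : ℕ) (N : Fin n → Type u)
    [Ring A] [∀ i, AddCommGroup (N i)] [∀ i, Module A (N i)]
    (hloc : ∀ i, IsLocalRing (Module.End A (N i)))
    (M : Type u) [AddCommGroup M] [Module A M]
    (φ : M ≃ₗ[A] ∀ i, N i)
    (h : (Module.End A M)ᵐᵒᵖ) :
    h ∈ absJacobson (Module.End A M)ᵐᵒᵖ ↔
      ∀ j i : Fin n, ¬ Function.Bijective
        (LinearMap.proj i ∘ₗ φ.toLinearMap ∘ₗ MulOpposite.unop h ∘ₗ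
          φ.symm.toLinearMap ∘ₗ LinearMap.single A N j) := by
  rw [mem_absJacobson_iff]
  have hcomap : Ideal.comap ((conjRing (A := A) φ) : Module.End A M →+* Module.End A (∀ i, N i))
      (Ideal.jacobson (⊥ : Ideal (Module.End A (∀ i, N i))))
      = Ideal.jacobson (⊥ : Ideal (Module.End A M)) := by
    rw [Ideal.comap_jacobson_of_surjective (conjRing (A := A) φ).surjective]
    congr 1
    exact Ideal.comap_bot_of_injective _ (conjRing (A := A) φ).injective
  rw [← hcomap, Ideal.mem_comap, mem_jacobson_pi_iff A n N hloc]
  constructor <;> intro H j i <;> exact H j i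
end

section
/- Let 𝔯 be a complete, separated, right linear topological ring, X a set, and N a discrete right 𝔯-module. Then the map sending a finitely supported family (n_x)_{x∈X} of elements of N to the right 𝔯-module homomorphism 𝔯^X → N, (r_x)_{x∈X} ↦ ∑_{x∈X} n_x r_x (a finite sum), is a bijection from the set of finitely supported X-indexed families in N onto the set of continuous right 𝔯-module homomorphisms from the topological product 𝔯^X (with the product topology) to N (with the discrete topology). -/
open Filter MulOpposite

universe u

lemma aux_cont_discrete {α N : Type*} [TopologicalSpace α] [TopologicalSpace N]
    [DiscreteTopology N] (g : α → N) (h : ∀ m, IsOpen (g ⁻¹' {m})) : Continuous g := by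
  rw [continuous_def]
  intro s _
  have : g ⁻¹' s = ⋃ m ∈ s, g ⁻¹' {m} := by ext a; simp
  rw [this]
  exact isOpen_biUnion fun m _ => h m

theorem continuous_homs_from_product_eq_finsupp
    (R : Type u) [Ring R] [UniformSpace R] [IsUniformAddGroup R] [IsTopologicalRing R]
    [T2Space R] [CompleteSpace R] (hRL : IsRightLinearTopology R)
    (X : Type u) (N : Type u) [AddCommGroup N] [Module Rᵐᵒᵖ N]
    (hN : IsDiscreteModule R N) :
    letI : TopologicalSpace N := ⊥
    -- the assignment sends a finitely supported family `n` to the homomorphism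
    -- `(r_x)_{x ∈ X} ↦ ∑_x n_x r_x`; it takes values in continuous module homomorphisms
    (∀ n : X →₀ N,
        IsLinearMap Rᵐᵒᵖ (fun r : X → R => n.sum fun x nx => op (r x) • nx) ∧
        Continuous (fun r : X → R => n.sum fun x nx => op (r x) • nx)) ∧
    -- and it is a bijection onto the set of continuous module homomorphisms `R^X → N`
    ∀ f : (X → R) → N, IsLinearMap Rᵐᵒᵖ f → Continuous f →
      ∃! n : X →₀ N, f = fun r : X → R => n.sum fun x nx => op (r x) • nx := by
  classical
  letI : TopologicalSpace N := ⊥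
  haveI : DiscreteTopology N := ⟨rfl⟩
  haveI : ContinuousAdd N := ⟨continuous_of_discreteTopology⟩
  -- continuity of scalar multiplication maps into discrete N
  have cont_smul : ∀ nx : N, Continuous (fun s : R => op s • nx) := by
    intro nx
    apply aux_cont_discrete
    intro m
    by_cases hm : ∃ r₀ : R, op r₀ • nx = m
    · obtain ⟨r₀, hr₀⟩ := hm
      have hset : (fun s : R => op s • nx) ⁻¹' {m}
          = (fun s : R => s - r₀) ⁻¹' {r : R | op r • nx = 0} := by
        ext s
        simp only [Set.mem_preimage, Set.mem_singleton_iff, Set.mem_setOf_eq, ← hr₀,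
          op_sub, sub_smul, sub_eq_zero]
      rw [hset]
      exact (hN nx).preimage (continuous_id.sub continuous_const)
    · have : (fun s : R => op s • nx) ⁻¹' {m} = ∅ := by
        ext s; simp only [Set.mem_preimage, Set.mem_singleton_iff, Set.mem_empty_iff_false,
          iff_false]
        exact fun h => hm ⟨s, h⟩
      rw [this]; exact isOpen_empty
  have single_eq : ∀ (s : R) (x : X), Pi.single x s = op s • (Pi.single x (1:R) : X → R) := by
    intro s x
    funext y
    by_cases h : y = x
    · subst h; simp [op_smul_eq_mul]
    · simp [Pi.single_eq_of_ne h, op_smul_eq_mul]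
  constructor
  · intro n
    constructor
    · constructor
      · intro a b
        simp only [Pi.add_apply, op_add, add_smul]
        exact Finsupp.sum_add
      · intro c a
        have : ∀ x : X, op ((c • a) x) = c * op (a x) := by
          intro x
          simp only [Pi.smul_apply]
          rw [← op_unop c, ← op_mul, op_unop]
          congr 1
        simp only [this, mul_smul]
        exact (Finsupp.smul_sum).symm
    · have : (fun r : X → R => n.sum fun x nx => op (r x) • nx)
          = fun r : X → R => ∑ x ∈ n.support, op (r x) • n x := rfl
      rw [this]
      exact continuous_finset_sum _ fun x _ => (cont_smul (n x)).comp (continuous_apply x)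
  · intro f hf hfc
    have hf0 : f 0 = 0 := hf.mk' f |>.map_zero
    have h0 : f ⁻¹' {0} ∈ nhds (0 : X → R) := by
      refine (hfc.isOpen_preimage {0} (isOpen_discrete _)).mem_nhds ?_
      simp [hf0]
    rw [nhds_pi, Filter.mem_pi] at h0
    obtain ⟨I, hIfin, t, ht, hsub⟩ := h0
    set S : Finset X := hIfin.toFinset with hS
    have hker : ∀ r : X → R, (∀ x ∈ S, r x = 0) → f r = 0 := by
      intro r hr
      apply hsub
      intro i hi
      rw [hr i (hIfin.mem_toFinset.mpr hi)]
      exact mem_of_mem_nhds (ht i)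
    have key : ∀ r : X → R, f r = ∑ x ∈ S, op (r x) • f (Pi.single x 1) := by
      intro r
      have hsplit : f r = f (∑ x ∈ S, Pi.single x (r x))
          + f (r - ∑ x ∈ S, Pi.single x (r x)) := by
        rw [← hf.map_add]
        congr 1
        abel
      have h2 : f (r - ∑ x ∈ S, Pi.single x (r x)) = 0 := by
        apply hker
        intro x hx
        simp [Finset.sum_apply, Finset.sum_pi_single, hx]
      have h3 : f (∑ x ∈ S, Pi.single x (r x))
          = ∑ x ∈ S, op (r x) • f (Pi.single x 1) := by
        rw [show f = ⇑(hf.mk' f) from rfl, map_sum]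
        refine Finset.sum_congr rfl fun x _ => ?_
        rw [single_eq (r x) x, map_smul]
      rw [hsplit, h2, h3, add_zero]
    have hsupp : ∀ x : X, f (Pi.single x 1) ≠ 0 → x ∈ S := by
      intro x hx
      by_contra hxS
      apply hx
      apply hker
      intro y hy
      exact Pi.single_eq_of_ne (by rintro rfl; exact hxS hy) 1
    refine ⟨Finsupp.onFinset S (fun x => f (Pi.single x 1)) hsupp, ?_, ?_⟩
    · funext r
      rw [key r]
      rw [Finsupp.onFinset_sum _ (fun x => by simp)]
    · intro m hm
      ext x
      have hx : f (Pi.single x 1) = m.sum fun y ny => op ((Pi.single x (1:R) : X → R) y) • ny := by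
        rw [hm]
      have heval : (m.sum fun y ny => op ((Pi.single x (1:R) : X → R) y) • ny) = m x := by
        have : ∀ y ∈ m.support, (fun y ny => op ((Pi.single x (1:R) : X → R) y) • ny) y (m y)
            = if y = x then m y else 0 := by
          intro y _
          by_cases h : y = x
          · subst h; simp
          · simp [Pi.single_eq_of_ne h, h]
        rw [Finsupp.sum, Finset.sum_congr rfl this, Finset.sum_ite_eq' m.support x (fun y => m y)]
        by_cases hxm : x ∈ m.support
        · simp [hxm]
        · simp [hxm, Finsupp.notMem_support_iff.mp hxm]
      simp only [Finsupp.onFinset_apply]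
      rw [hx, heval]
end
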